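/- arXiv:1701.06009 — 7 statements merged into one kernel-verified Lean document; each statement's English description precedes it below -/
import Mathlib

section
/- Fix κ ≥ 1. There exists a constant C > 0 depending only on κ such that the following holds: for all positive integers l ≤ m, all λ > 0, all m×l real matrices A, B with AᵀA = BᵀB = I_l, and every l×l symmetric positive definite matrix M all of whose eigenvalues d satisfy λ ≤ d ≤ κλ, if AᵀB is a diagonal matrix with nonnegative diagonal entries, then ‖AMAᵀ − BMBᵀ‖_F ≤ C λ ‖AAᵀ − BBᵀ‖_F. -/
open Matrix

/-- Frobenius norm of a real matrix: `‖M‖_F = (tr (M Mᵀ))^{1/2}`. -/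
noncomputable def frobNorm {m n : Type*} [Fintype m] [Fintype n]
    (M : Matrix m n ℝ) : ℝ :=
  Real.sqrt (Matrix.trace (M * Mᵀ))

/-! With `E = A - B` one has `AMAᵀ - BMBᵀ = EMAᵀ + (EMBᵀ)ᵀ`, and right multiplication by the
transpose of a matrix with orthonormal columns preserves the Frobenius norm, so the left side has
norm at most `2‖EM‖_F ≤ 2κλ‖E‖_F` (diagonalise `M` orthogonally). With `G = AᵀB`,
`‖E‖_F² = 2l - 2 tr G` and `‖AAᵀ - BBᵀ‖_F² = 2l - 2 tr (GGᵀ)`; as `G` is diagonal with entries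
in `[0, 1]`, `tr (GGᵀ) ≤ tr G`, hence `‖E‖_F ≤ ‖AAᵀ - BBᵀ‖_F` and `C = 2κ` works. -/

attribute [local instance] Matrix.frobeniusNormedAddCommGroup

section

variable {m n p : Type*} [Fintype m] [Fintype n] [Fintype p]

lemma frobNorm_eq_norm (X : Matrix m n ℝ) : frobNorm X = ‖X‖ := by
  rw [frobNorm, frobenius_norm_def, Real.sqrt_eq_rpow, trace]
  simp [mul_apply, Real.norm_eq_abs, sq]

lemma frobNorm_sq_eq_sum (X : Matrix m n ℝ) : frobNorm X ^ 2 = ∑ i, ∑ j, X i j ^ 2 := by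
  rw [frobNorm, Real.sq_sqrt]
  · simp [trace, mul_apply, sq]
  · simpa using (posSemidef_self_mul_conjTranspose X).trace_nonneg

lemma frobNorm_nonneg (X : Matrix m n ℝ) : 0 ≤ frobNorm X := Real.sqrt_nonneg _

lemma frobNorm_transpose (X : Matrix m n ℝ) : frobNorm Xᵀ = frobNorm X := by
  rw [frobNorm, frobNorm, transpose_transpose, trace_mul_comm]

lemma frobNorm_mul_transpose_of_orthonormal [DecidableEq n] (X : Matrix m n ℝ)
    {C : Matrix p n ℝ} (hC : Cᵀ * C = 1) : frobNorm (X * Cᵀ) = frobNorm X := by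
  rw [frobNorm, frobNorm, transpose_mul, transpose_transpose, Matrix.mul_assoc,
    ← Matrix.mul_assoc Cᵀ, hC, Matrix.one_mul]

lemma frobNorm_mul_diagonal_le [DecidableEq n] {d : n → ℝ} {c : ℝ} (hc : 0 ≤ c)
    (hd : ∀ j, |d j| ≤ c) (X : Matrix m n ℝ) : frobNorm (X * diagonal d) ≤ c * frobNorm X := by
  refine (pow_le_pow_iff_left₀ (frobNorm_nonneg _) (mul_nonneg hc (frobNorm_nonneg _))
    two_ne_zero).mp ?_
  rw [mul_pow, frobNorm_sq_eq_sum, frobNorm_sq_eq_sum, Finset.mul_sum]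
  refine Finset.sum_le_sum fun i _ => ?_
  rw [Finset.mul_sum]
  refine Finset.sum_le_sum fun j _ => ?_
  rw [mul_diagonal, mul_pow, mul_comm]
  exact mul_le_mul_of_nonneg_right (sq_le_sq' (abs_le.mp (hd j)).1 (abs_le.mp (hd j)).2)
    (sq_nonneg _)

lemma frobNorm_mul_le_of_abs_eigenvalues_le [DecidableEq n] {M : Matrix n n ℝ}
    (hM : M.IsHermitian) {c : ℝ} (hc : 0 ≤ c) (heig : ∀ i, |hM.eigenvalues i| ≤ c)
    (X : Matrix m n ℝ) : frobNorm (X * M) ≤ c * frobNorm X := by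
  set U : Matrix n n ℝ := (hM.eigenvectorUnitary : Matrix n n ℝ)
  have hU : Uᵀ * U = 1 := by
    simpa [U, star_eq_conjTranspose] using Unitary.coe_star_mul_self hM.eigenvectorUnitary
  have hUt : Uᵀᵀ * Uᵀ = 1 := by
    simpa [U, star_eq_conjTranspose] using Unitary.coe_mul_star_self hM.eigenvectorUnitary
  have hspec : M = U * diagonal hM.eigenvalues * Uᵀ := by
    simpa [U, star_eq_conjTranspose] using hM.spectral_theorem
  calc frobNorm (X * M) = frobNorm (X * U * diagonal hM.eigenvalues) := by
        conv_lhs => rw [hspec, ← Matrix.mul_assoc, ← Matrix.mul_assoc,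
          frobNorm_mul_transpose_of_orthonormal _ hU]
    _ ≤ c * frobNorm (X * U) := frobNorm_mul_diagonal_le hc heig _
    _ = c * frobNorm X := by
        rw [← frobNorm_mul_transpose_of_orthonormal X hUt, transpose_transpose]

end

lemma Matrix.IsDiag.trace_mul_transpose_le_trace {n : Type*} [Fintype n] [DecidableEq n]
    {G : Matrix n n ℝ} (hG : G.IsDiag) (h0 : ∀ i, 0 ≤ G i i) (h1 : ∀ i, G i i ≤ 1) :
    trace (G * Gᵀ) ≤ trace G := by
  rw [← hG.diagonal_diag, diagonal_transpose, diagonal_mul_diagonal, trace_diagonal,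
    trace_diagonal]
  exact Finset.sum_le_sum fun i _ => mul_le_of_le_one_right (h0 i) (h1 i)

section

variable {m n : Type*} [Fintype m] [Fintype n] [DecidableEq n] {A B : Matrix m n ℝ}

lemma trace_sub_mul_transpose_sub_of_orthonormal (hA : Aᵀ * A = 1) (hB : Bᵀ * B = 1) :
    trace ((A - B) * (A - B)ᵀ) = 2 * Fintype.card n - 2 * trace (Aᵀ * B) := by
  have hBA : Bᵀ * A = (Aᵀ * B)ᵀ := by rw [transpose_mul, transpose_transpose]
  rw [trace_mul_comm, transpose_sub, Matrix.sub_mul, Matrix.mul_sub, Matrix.mul_sub, hA, hB, hBA,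
    trace_sub, trace_sub, trace_sub, trace_transpose, trace_one]
  ring

lemma trace_projection_sub_sq_of_orthonormal (hA : Aᵀ * A = 1) (hB : Bᵀ * B = 1) :
    trace ((A * Aᵀ - B * Bᵀ) * (A * Aᵀ - B * Bᵀ)ᵀ) =
      2 * Fintype.card n - 2 * trace (Aᵀ * B * (Aᵀ * B)ᵀ) := by
  have hcycle (X Y : Matrix m n ℝ) : trace (X * Xᵀ * (Y * Yᵀ)) = trace (Xᵀ * Y * (Xᵀ * Y)ᵀ) := by
    rw [Matrix.mul_assoc, trace_mul_comm, transpose_mul, transpose_transpose]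
    simp only [Matrix.mul_assoc]
  have hBA : Bᵀ * A = (Aᵀ * B)ᵀ := by rw [transpose_mul, transpose_transpose]
  rw [transpose_sub, transpose_mul, transpose_mul, transpose_transpose, transpose_transpose,
    Matrix.sub_mul, Matrix.mul_sub, Matrix.mul_sub, trace_sub, trace_sub, trace_sub,
    hcycle, hcycle, hcycle, hcycle, hA, hB, hBA, transpose_transpose,
    trace_mul_comm (Aᵀ * B)ᵀ, Matrix.one_mul, transpose_one, trace_one]
  ring

lemma transpose_mul_apply_self_le_one_of_orthonormal (hA : Aᵀ * A = 1) (hB : Bᵀ * B = 1)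
    (i : n) : (Aᵀ * B) i i ≤ 1 := by
  have h := (posSemidef_conjTranspose_mul_self (A - B)).diag_nonneg (i := i)
  have hBA : Bᵀ * A = (Aᵀ * B)ᵀ := by rw [transpose_mul, transpose_transpose]
  rw [conjTranspose_eq_transpose_of_trivial, transpose_sub, Matrix.sub_mul, Matrix.mul_sub,
    Matrix.mul_sub, hA, hB, hBA] at h
  simp only [Matrix.sub_apply, transpose_apply, one_apply_eq] at h
  linarith

lemma frobNorm_sub_le_frobNorm_projection_sub (hA : Aᵀ * A = 1) (hB : Bᵀ * B = 1)
    (hdiag : (Aᵀ * B).IsDiag) (hnonneg : ∀ i, 0 ≤ (Aᵀ * B) i i) :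
    frobNorm (A - B) ≤ frobNorm (A * Aᵀ - B * Bᵀ) := by
  refine Real.sqrt_le_sqrt ?_
  rw [trace_sub_mul_transpose_sub_of_orthonormal hA hB,
    trace_projection_sub_sq_of_orthonormal hA hB]
  linarith [hdiag.trace_mul_transpose_le_trace hnonneg
    (transpose_mul_apply_self_le_one_of_orthonormal hA hB)]

lemma frobNorm_conj_sub_le (hA : Aᵀ * A = 1) (hB : Bᵀ * B = 1) {M : Matrix n n ℝ}
    (hM : M.IsHermitian) {c : ℝ} (hc : 0 ≤ c) (heig : ∀ i, |hM.eigenvalues i| ≤ c) :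
    frobNorm (A * M * Aᵀ - B * M * Bᵀ) ≤ 2 * c * frobNorm (A - B) := by
  have hMt : Mᵀ = M := by rw [← conjTranspose_eq_transpose_of_trivial]; exact hM
  have hsplit : A * M * Aᵀ - B * M * Bᵀ = (A - B) * M * Aᵀ + ((A - B) * M * Bᵀ)ᵀ := by
    simp only [transpose_mul, transpose_transpose, hMt, transpose_sub, Matrix.sub_mul,
      Matrix.mul_assoc]
    abel
  calc frobNorm (A * M * Aᵀ - B * M * Bᵀ)
      ≤ frobNorm ((A - B) * M * Aᵀ) + frobNorm ((A - B) * M * Bᵀ)ᵀ := by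
        rw [hsplit, frobNorm_eq_norm, frobNorm_eq_norm, frobNorm_eq_norm]
        exact norm_add_le _ _
    _ = 2 * frobNorm ((A - B) * M) := by
        rw [frobNorm_transpose, frobNorm_mul_transpose_of_orthonormal _ hA,
          frobNorm_mul_transpose_of_orthonormal _ hB]
        ring
    _ ≤ 2 * c * frobNorm (A - B) := by
        rw [mul_assoc]
        gcongr
        exact frobNorm_mul_le_of_abs_eigenvalues_le hM hc heig _

end

/-- Fix `κ ≥ 1`. There exists a constant `C > 0` depending only on `κ` such
that for all positive integers `l ≤ m`, all `λ > 0`, all `m×l` matrices `A, B` with orthonormal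
columns, and every symmetric positive definite `l×l` matrix `M` all of whose eigenvalues lie in
`[λ, κλ]`, if `AᵀB` is diagonal with nonnegative diagonal entries, then
`‖AMAᵀ − BMBᵀ‖_F ≤ C λ ‖AAᵀ − BBᵀ‖_F`. -/
theorem exists_const_frobNorm_conjugation_diff_le (κ : ℝ) (hκ : 1 ≤ κ) :
    ∃ C : ℝ, 0 < C ∧
      ∀ (l m : ℕ), 0 < l → l ≤ m →
        ∀ (lam : ℝ), 0 < lam →
          ∀ (A B : Matrix (Fin m) (Fin l) ℝ)
            (M : Matrix (Fin l) (Fin l) ℝ) (hM : M.IsHermitian),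
            M.PosDef →
            (∀ i, lam ≤ hM.eigenvalues i ∧ hM.eigenvalues i ≤ κ * lam) →
            Aᵀ * A = 1 → Bᵀ * B = 1 →
            (Aᵀ * B).IsDiag → (∀ i, 0 ≤ (Aᵀ * B) i i) →
            frobNorm (A * M * Aᵀ - B * M * Bᵀ) ≤ C * lam * frobNorm (A * Aᵀ - B * Bᵀ) := by
  refine ⟨2 * κ, by linarith, fun l m _ _ lam hlam A B M hM _ heig hA hB hdiag hnonneg => ?_⟩
  have habs : ∀ i, |hM.eigenvalues i| ≤ κ * lam := fun i =>
    (abs_of_pos (hlam.trans_le (heig i).1)).trans_le (heig i).2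
  calc frobNorm (A * M * Aᵀ - B * M * Bᵀ)
      ≤ 2 * (κ * lam) * frobNorm (A - B) := frobNorm_conj_sub_le hA hB hM (by positivity) habs
    _ ≤ 2 * κ * lam * frobNorm (A * Aᵀ - B * Bᵀ) := by
        rw [← mul_assoc]
        gcongr
        exact frobNorm_sub_le_frobNorm_projection_sub hA hB hdiag hnonneg
end

section
/- Let M be an l×l symmetric positive definite real matrix with eigenvalues λ₁ ≥ λ₂ ≥ ... ≥ λ_l > 0, and let A, B, E, F be m×l real matrices with AᵀA = BᵀB = EᵀE = FᵀF = I_l. Then (λ_l/2)‖ABᵀ − EFᵀ‖_F² ≤ ⟨AMBᵀ, ABᵀ − EFᵀ⟩ ≤ (λ₁/2)‖ABᵀ − EFᵀ‖_F², where ⟨X, Y⟩ = tr(XYᵀ) is the trace inner product on matrices. -/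
/-!
With `K = Aᵀ (ABᵀ - EFᵀ) B = 1 - (EᵀA)ᵀ(FᵀB)`, the middle term is `⟨M, K⟩` and
`‖ABᵀ - EFᵀ‖_F² = 2 tr K`. As `EᵀA` and `FᵀB` are contractions, `K + Kᵀ` is positive
semidefinite, so `⟨N, K⟩ = ½ tr (N (K + Kᵀ)) ≥ 0` for the positive semidefinite matrices
`N = M - λ_l` and `N = λ₁ - M`.
-/

open Matrix

/-- Trace inner product on matrices: `⟨X, Y⟩ = tr (X Yᵀ)`. -/
noncomputable def traceInner {m n : Type*} [Fintype m] [Fintype n]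
    (X Y : Matrix m n ℝ) : ℝ :=
  Matrix.trace (X * Yᵀ)

open scoped MatrixOrder ComplexOrder

theorem Matrix.PosSemidef.trace_mul_nonneg {n 𝕜 : Type*} [RCLike 𝕜] [Fintype n]
    {N P : Matrix n n 𝕜} (hN : N.PosSemidef) (hP : P.PosSemidef) : 0 ≤ (N * P).trace := by
  classical
  obtain ⟨X, rfl⟩ := CStarAlgebra.nonneg_iff_eq_star_mul_self.mp hP.nonneg
  rw [star_eq_conjTranspose, ← Matrix.mul_assoc, trace_mul_comm, ← Matrix.mul_assoc]
  exact (hN.mul_mul_conjTranspose_same X).trace_nonneg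

namespace Matrix.IsHermitian

variable {n 𝕜 : Type*} [RCLike 𝕜] [Fintype n] [DecidableEq n] {M : Matrix n n 𝕜}

theorem posSemidef_sub_smul_one (hM : M.IsHermitian) {c : ℝ}
    (h : ∀ i, c ≤ hM.eigenvalues i) : (M - (c : 𝕜) • 1).PosSemidef := by
  have : algebraMap ℝ _ c ≤ M := algebraMap_le_of_le_spectrum (by
    rw [hM.spectrum_real_eq_range_eigenvalues]; rintro _ ⟨i, rfl⟩; exact h i) hM.isSelfAdjoint
  rwa [Algebra.algebraMap_eq_smul_one, RCLike.real_smul_eq_coe_smul (K := 𝕜),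
    Matrix.le_iff] at this

theorem posSemidef_smul_one_sub (hM : M.IsHermitian) {c : ℝ}
    (h : ∀ i, hM.eigenvalues i ≤ c) : ((c : 𝕜) • 1 - M).PosSemidef := by
  have : M ≤ algebraMap ℝ _ c := le_algebraMap_of_spectrum_le (by
    rw [hM.spectrum_real_eq_range_eigenvalues]; rintro _ ⟨i, rfl⟩; exact h i) hM.isSelfAdjoint
  rwa [Algebra.algebraMap_eq_smul_one, RCLike.real_smul_eq_coe_smul (K := 𝕜),
    Matrix.le_iff] at this

end Matrix.IsHermitian

section TraceInner

variable {l m k : Type*} [Fintype l] [Fintype m] [Fintype k]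

theorem frobNorm_sq (D : Matrix m l ℝ) : frobNorm D ^ 2 = traceInner D D :=
  Real.sq_sqrt (posSemidef_self_mul_conjTranspose D).trace_nonneg

theorem traceInner_one_left [DecidableEq l] (K : Matrix l l ℝ) : traceInner 1 K = K.trace := by
  rw [traceInner, Matrix.one_mul, trace_transpose]

theorem traceInner_mul_mul_transpose (A : Matrix m l ℝ) (B : Matrix k l ℝ) (X : Matrix l l ℝ)
    (Y : Matrix m k ℝ) : traceInner (A * X * Bᵀ) Y = traceInner X (Aᵀ * Y * B) := by
  simp only [traceInner, transpose_mul, transpose_transpose, Matrix.mul_assoc]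
  rw [trace_mul_comm]
  simp only [Matrix.mul_assoc]

theorem traceInner_mul_transpose (A : Matrix m l ℝ) (B : Matrix k l ℝ) (D : Matrix m k ℝ) :
    traceInner (A * Bᵀ) D = (Aᵀ * D * B).trace := by
  classical
  simpa only [Matrix.mul_one, traceInner_one_left] using traceInner_mul_mul_transpose A B 1 D

theorem traceInner_nonneg_of_posSemidef {N K : Matrix l l ℝ} (hN : N.PosSemidef)
    (hK : (K + Kᵀ).PosSemidef) : 0 ≤ traceInner N K := by
  have hNt : Nᵀ = N := hN.isHermitian
  have : (N * (K + Kᵀ)).trace = 2 * traceInner N K := by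
    rw [traceInner, Matrix.mul_add, trace_add, ← trace_transpose (N * K), transpose_mul, hNt,
      trace_mul_comm]
    ring
  linarith [hN.trace_mul_nonneg hK]

theorem traceInner_bounds_of_eigenvalues [DecidableEq l] {M K : Matrix l l ℝ}
    (hM : M.IsHermitian) {a b : ℝ} (ha : ∀ i, a ≤ hM.eigenvalues i) (hb : ∀ i, hM.eigenvalues i ≤ b)
    (hK : (K + Kᵀ).PosSemidef) : a * K.trace ≤ traceInner M K ∧ traceInner M K ≤ b * K.trace := by
  have hlo := traceInner_nonneg_of_posSemidef (hM.posSemidef_sub_smul_one ha) hK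
  have hhi := traceInner_nonneg_of_posSemidef (hM.posSemidef_smul_one_sub hb) hK
  simp only [traceInner, Matrix.sub_mul, trace_sub, smul_mul, Matrix.one_mul, trace_smul,
    trace_transpose, RCLike.ofReal_real_eq_id, id, smul_eq_mul] at hlo hhi ⊢
  exact ⟨by linarith, by linarith⟩

end TraceInner

section Orthonormal

variable {l m k n : Type*} [Fintype l] [Fintype m] [Fintype k] [Fintype n] [DecidableEq l]

theorem posSemidef_one_sub_transpose_mul_self_of_orthonormal [DecidableEq n] {A : Matrix m l ℝ}
    {E : Matrix m n ℝ} (hA : Aᵀ * A = 1) (hE : Eᵀ * E = 1) :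
    (1 - (Eᵀ * A)ᵀ * (Eᵀ * A)).PosSemidef := by
  have h : (A - E * (Eᵀ * A))ᵀ * (A - E * (Eᵀ * A)) = 1 - (Eᵀ * A)ᵀ * (Eᵀ * A) := by
    have hE' : Eᵀ * (E * (Eᵀ * A)) = Eᵀ * A := by rw [← Matrix.mul_assoc, hE, Matrix.one_mul]
    simp only [transpose_sub, transpose_mul, transpose_transpose, Matrix.sub_mul, Matrix.mul_sub,
      Matrix.mul_assoc, hE', hA]
    abel
  rw [← h]
  exact posSemidef_conjTranspose_mul_self _

theorem posSemidef_add_transpose_one_sub_transpose_mul {P Q : Matrix n l ℝ}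
    (hP : (1 - Pᵀ * P).PosSemidef) (hQ : (1 - Qᵀ * Q).PosSemidef) :
    ((1 - Pᵀ * Q) + (1 - Pᵀ * Q)ᵀ).PosSemidef := by
  have h : (1 - Pᵀ * Q) + (1 - Pᵀ * Q)ᵀ = (P - Q)ᵀ * (P - Q) + (1 - Pᵀ * P) + (1 - Qᵀ * Q) := by
    simp only [transpose_sub, transpose_mul, transpose_transpose, transpose_one, Matrix.sub_mul,
      Matrix.mul_sub]
    abel
  rw [h]
  exact ((posSemidef_conjTranspose_mul_self _).add hP).add hQ

variable {A E : Matrix m l ℝ} {B F : Matrix k l ℝ}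

theorem transpose_mul_sub_mul_transpose_mul (hA : Aᵀ * A = 1) (hB : Bᵀ * B = 1) :
    Aᵀ * (A * Bᵀ - E * Fᵀ) * B = 1 - (Eᵀ * A)ᵀ * (Fᵀ * B) := by
  simp only [Matrix.mul_sub, Matrix.sub_mul, transpose_mul, transpose_transpose, Matrix.mul_assoc]
  rw [← Matrix.mul_assoc Aᵀ A, hA, Matrix.one_mul, hB]

theorem frobNorm_sq_mul_transpose_sub_mul_transpose (hA : Aᵀ * A = 1) (hB : Bᵀ * B = 1)
    (hE : Eᵀ * E = 1) (hF : Fᵀ * F = 1) :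
    frobNorm (A * Bᵀ - E * Fᵀ) ^ 2 = 2 * (1 - (Eᵀ * A)ᵀ * (Fᵀ * B)).trace := by
  have hswap : ((Aᵀ * E)ᵀ * (Bᵀ * F)).trace = ((Eᵀ * A)ᵀ * (Fᵀ * B)).trace := by
    rw [← trace_transpose, trace_mul_comm]
    simp only [transpose_mul, transpose_transpose, Matrix.mul_assoc]
  have hEF : traceInner (E * Fᵀ) (A * Bᵀ - E * Fᵀ) = -(1 - (Eᵀ * A)ᵀ * (Fᵀ * B)).trace := by
    rw [← neg_sub, traceInner, transpose_neg, Matrix.mul_neg, trace_neg, ← traceInner,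
      traceInner_mul_transpose, transpose_mul_sub_mul_transpose_mul hE hF,
      trace_sub, trace_sub, hswap]
  rw [frobNorm_sq, traceInner, Matrix.sub_mul, trace_sub, ← traceInner, ← traceInner,
    traceInner_mul_transpose, transpose_mul_sub_mul_transpose_mul hA hB, hEF]
  ring

end Orthonormal

theorem traceInner_bounds_general (l m : ℕ)
    (M : Matrix (Fin l) (Fin l) ℝ) (hM : M.IsHermitian)
    (lam1 laml : ℝ)
    (heig : ∀ i, laml ≤ hM.eigenvalues i ∧ hM.eigenvalues i ≤ lam1)
    (A B E F : Matrix (Fin m) (Fin l) ℝ)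
    (hA : Aᵀ * A = 1) (hB : Bᵀ * B = 1) (hE : Eᵀ * E = 1) (hF : Fᵀ * F = 1) :
    laml / 2 * frobNorm (A * Bᵀ - E * Fᵀ) ^ 2
        ≤ traceInner (A * M * Bᵀ) (A * Bᵀ - E * Fᵀ) ∧
      traceInner (A * M * Bᵀ) (A * Bᵀ - E * Fᵀ)
        ≤ lam1 / 2 * frobNorm (A * Bᵀ - E * Fᵀ) ^ 2 := by
  have hK := posSemidef_add_transpose_one_sub_transpose_mul
    (posSemidef_one_sub_transpose_mul_self_of_orthonormal hA hE)
    (posSemidef_one_sub_transpose_mul_self_of_orthonormal hB hF)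
  obtain ⟨hlo, hhi⟩ := traceInner_bounds_of_eigenvalues hM (fun i => (heig i).1)
    (fun i => (heig i).2) hK
  rw [traceInner_mul_mul_transpose, transpose_mul_sub_mul_transpose_mul hA hB,
    frobNorm_sq_mul_transpose_sub_mul_transpose hA hB hE hF]
  constructor <;> linarith

/-- Let `M` be a symmetric positive definite `l×l` matrix whose eigenvalues
all lie in `[λ_l, λ₁]` with `λ_l > 0`, and let `A, B, E, F` be `m×l` matrices with
orthonormal columns. Then
`(λ_l/2)‖ABᵀ − EFᵀ‖_F² ≤ ⟨AMBᵀ, ABᵀ − EFᵀ⟩ ≤ (λ₁/2)‖ABᵀ − EFᵀ‖_F²`. -/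
theorem traceInner_bounds (l m : ℕ)
    (M : Matrix (Fin l) (Fin l) ℝ) (hM : M.IsHermitian) (hMpd : M.PosDef)
    (lam1 laml : ℝ) (hlaml : 0 < laml)
    (heig : ∀ i, laml ≤ hM.eigenvalues i ∧ hM.eigenvalues i ≤ lam1)
    (A B E F : Matrix (Fin m) (Fin l) ℝ)
    (hA : Aᵀ * A = 1) (hB : Bᵀ * B = 1) (hE : Eᵀ * E = 1) (hF : Fᵀ * F = 1) :
    laml / 2 * frobNorm (A * Bᵀ - E * Fᵀ) ^ 2
        ≤ traceInner (A * M * Bᵀ) (A * Bᵀ - E * Fᵀ) ∧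
      traceInner (A * M * Bᵀ) (A * Bᵀ - E * Fᵀ)
        ≤ lam1 / 2 * frobNorm (A * Bᵀ - E * Fᵀ) ^ 2 :=
  traceInner_bounds_general l m M hM lam1 laml heig A B E F hA hB hE hF
end

section
/- Let 0 < q < 2, s > 0, and let V be a p×d real matrix with VᵀV = I_d whose weak-ℓ_q radius satisfies ‖V‖_{q,w} ≤ s. Then for every k ∈ {1,...,p}, the sum of the squared row norms beyond the k largest satisfies Σ_{i>k} ‖V_{(i),*}‖₂² ≤ (q/(2−q)) · k · (s/k)^{2/q}. -/
/-! The weak-`ℓ_q` bound gives `‖V_{(i),*}‖₂² ≤ (s/i)^{2/q}` for each `i`, and since `2/q > 1` the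
tail `∑_{i>k} i^{-2/q}` is at most `∫_k^∞ t^{-2/q} dt = k^{1-2/q}/(2/q - 1)`; multiplying by
`s^{2/q}` gives the bound, as `1/(2/q - 1) = q/(2 - q)`. -/

open Matrix Finset

/-- Euclidean norm of the `i`-th row of a matrix. -/
noncomputable def rowNorm {p d : ℕ} (V : Matrix (Fin p) (Fin d) ℝ) (i : Fin p) : ℝ :=
  Real.sqrt (∑ j, (V i j) ^ 2)

open Real

lemma Fin.sum_filter_le_val_eq_sum_Ico {M : Type*} [AddCommMonoid M] (n k : ℕ) (f : ℕ → M) :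
    ∑ i ∈ Finset.univ.filter (fun i : Fin n => k ≤ (i : ℕ)), f i = ∑ i ∈ Ico k n, f i := by
  rw [sum_filter, Fin.sum_univ_eq_sum_range (fun i => if k ≤ i then f i else 0), ← sum_filter,
    range_eq_Ico, Ico_filter_le, max_eq_right (Nat.zero_le k)]

lemma rpow_le_rpow_div_of_rpow_le {r t q e : ℝ} (hr : 0 ≤ r) (hq : 0 < q) (he : 0 ≤ e)
    (h : r ^ q ≤ t) : r ^ e ≤ t ^ (e / q) := by
  calc r ^ e = (r ^ q) ^ (e / q) := by rw [← rpow_mul hr, mul_div_cancel₀ e hq.ne']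
    _ ≤ t ^ (e / q) := rpow_le_rpow (rpow_nonneg hr q) h (div_nonneg he hq.le)

lemma sum_Ico_rpow_neg_le {a : ℝ} (ha : 1 < a) {k n : ℕ} (hk : 1 ≤ k) (hkn : k ≤ n) :
    ∑ i ∈ Ico k n, ((i : ℝ) + 1) ^ (-a) ≤ (k : ℝ) ^ (1 - a) / (a - 1) := by
  have hk0 : (0 : ℝ) < k := by exact_mod_cast hk
  have hanti : AntitoneOn (fun x : ℝ => x ^ (-a)) (Set.Icc k n) := fun x hx _ _ hxy =>
    rpow_le_rpow_of_nonpos (hk0.trans_le hx.1) hxy (by linarith)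
  have hzero : (0 : ℝ) ∉ Set.uIcc (k : ℝ) n := by
    rw [Set.uIcc_of_le (by exact_mod_cast hkn)]
    exact fun h => hk0.not_ge h.1
  calc ∑ i ∈ Ico k n, ((i : ℝ) + 1) ^ (-a)
      = ∑ i ∈ Ico k n, (fun x : ℝ => x ^ (-a)) ((i + 1 : ℕ) : ℝ) := by push_cast; rfl
    _ ≤ ∫ x in (k : ℝ)..n, x ^ (-a) := hanti.sum_le_integral_Ico hkn
    _ = ((k : ℝ) ^ (1 - a) - (n : ℝ) ^ (1 - a)) / (a - 1) := by
      rw [integral_rpow (Or.inr ⟨by linarith, hzero⟩), neg_add_eq_sub, ← neg_sub a 1,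
        div_neg, ← neg_div, neg_sub]
    _ ≤ (k : ℝ) ^ (1 - a) / (a - 1) := by
      gcongr
      exact sub_le_self _ (rpow_nonneg n.cast_nonneg _)

lemma sum_Ico_div_rpow_le {a s : ℝ} (ha : 1 < a) (hs : 0 ≤ s) {k n : ℕ} (hk : 1 ≤ k)
    (hkn : k ≤ n) :
    ∑ i ∈ Ico k n, (s / ((i : ℝ) + 1)) ^ a ≤ k * (s / k) ^ a / (a - 1) := by
  have hk0 : (0 : ℝ) < k := by exact_mod_cast hk
  have hsplit : ∀ x : ℝ, 0 < x → (s / x) ^ a = s ^ a * x ^ (-a) := fun x hx => by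
    rw [div_rpow hs hx.le, rpow_neg hx.le, div_eq_mul_inv]
  calc ∑ i ∈ Ico k n, (s / ((i : ℝ) + 1)) ^ a
      = s ^ a * ∑ i ∈ Ico k n, ((i : ℝ) + 1) ^ (-a) := by
        rw [mul_sum]
        exact sum_congr rfl fun i _ => hsplit _ (by positivity)
    _ ≤ s ^ a * ((k : ℝ) ^ (1 - a) / (a - 1)) := by
        gcongr
        exact sum_Ico_rpow_neg_le ha hk hkn
    _ = k * (s / k) ^ a / (a - 1) := by
        rw [hsplit k hk0, sub_eq_add_neg, rpow_add hk0, rpow_one]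
        ring

theorem sparse_approximation_tail_bound_general (p d : ℕ) (q s : ℝ)
    (hq0 : 0 < q) (hq2 : q < 2) (hs : 0 < s)
    (V : Matrix (Fin p) (Fin d) ℝ)
    (σ : Equiv.Perm (Fin p))
    (hweak : ∀ j : Fin p, ((j : ℕ) + 1 : ℝ) * rowNorm V (σ j) ^ q ≤ s) :
    ∀ k : ℕ, 1 ≤ k → k ≤ p →
      ∑ i ∈ Finset.univ.filter (fun i : Fin p => k ≤ (i : ℕ)), rowNorm V (σ i) ^ 2
        ≤ q / (2 - q) * k * (s / k) ^ (2 / q) := by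
  intro k hk hkp
  have hterm : ∀ i : Fin p, rowNorm V (σ i) ^ 2 ≤ (s / (((i : ℕ) : ℝ) + 1)) ^ (2 / q) := by
    intro i
    have hrq : rowNorm V (σ i) ^ q ≤ s / (((i : ℕ) : ℝ) + 1) := by
      rw [le_div_iff₀ (by positivity), mul_comm]
      exact hweak i
    exact_mod_cast rpow_le_rpow_div_of_rpow_le (sqrt_nonneg _) hq0 zero_le_two hrq
  calc ∑ i ∈ Finset.univ.filter (fun i : Fin p => k ≤ (i : ℕ)), rowNorm V (σ i) ^ 2
      ≤ ∑ i ∈ Finset.univ.filter (fun i : Fin p => k ≤ (i : ℕ)),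
          (s / (((i : ℕ) : ℝ) + 1)) ^ (2 / q) := sum_le_sum fun i _ => hterm i
    _ = ∑ i ∈ Ico k p, (s / ((i : ℝ) + 1)) ^ (2 / q) :=
        Fin.sum_filter_le_val_eq_sum_Ico p k fun i => (s / ((i : ℝ) + 1)) ^ (2 / q)
    _ ≤ k * (s / k) ^ (2 / q) / (2 / q - 1) :=
        sum_Ico_div_rpow_le ((one_lt_div hq0).2 hq2) hs.le hk hkp
    _ = q / (2 - q) * k * (s / k) ^ (2 / q) := by
        rw [div_sub_one hq0.ne', div_div_eq_mul_div]
        ring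

/-- Let `0 < q < 2`, `s > 0`, and let `V` be a `p×d` matrix with orthonormal
columns whose weak-`ℓ_q` radius is at most `s`; i.e. there is a permutation `σ` of `{1,...,p}`
arranging the row norms in decreasing order such that `j·‖V_{(j),*}‖₂^q ≤ s` for every `j`.
Then for every `k ∈ {1,...,p}`, the sum of the squared row norms beyond the `k` largest
satisfies `Σ_{i>k} ‖V_{(i),*}‖₂² ≤ (q/(2−q))·k·(s/k)^{2/q}`. -/
theorem sparse_approximation_tail_bound (p d : ℕ) (q s : ℝ)
    (hq0 : 0 < q) (hq2 : q < 2) (hs : 0 < s)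
    (V : Matrix (Fin p) (Fin d) ℝ) (hV : Vᵀ * V = 1)
    (σ : Equiv.Perm (Fin p))
    (hsort : ∀ i j : Fin p, i ≤ j → rowNorm V (σ j) ≤ rowNorm V (σ i))
    (hweak : ∀ j : Fin p, ((j : ℕ) + 1 : ℝ) * rowNorm V (σ j) ^ q ≤ s) :
    ∀ k : ℕ, 1 ≤ k → k ≤ p →
      ∑ i ∈ Finset.univ.filter (fun i : Fin p => k ≤ (i : ℕ)), rowNorm V (σ i) ^ 2
        ≤ q / (2 - q) * k * (s / k) ^ (2 / q) :=
  sparse_approximation_tail_bound_general p d q s hq0 hq2 hs V σ hweak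
end

section
/- Let γ ∈ ℝ^p be a unit vector with at most s nonzero entries, and let t > 0. Let T = {i : |γ(i)| ≥ t} and let γ_T ∈ ℝ^p be the vector agreeing with γ on T and equal to 0 outside T. If γ_T ≠ 0, then ‖γ − γ_T/‖γ_T‖₂‖₂² ≤ 2 s t². -/
open Finset

/-- Let `γ ∈ ℝ^p` be a unit vector with at most `s` nonzero entries, let
`t > 0`, let `T = {i : |γ(i)| ≥ t}` and let `γ_T` agree with `γ` on `T` and vanish off `T`.
If `γ_T ≠ 0`, then `‖γ − γ_T/‖γ_T‖₂‖₂² ≤ 2 s t²`. -/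
theorem thresholded_renormalization_error_le (p s : ℕ)
    (γ : Fin p → ℝ) (hγ : ∑ i, γ i ^ 2 = 1)
    (hsupp : (Finset.univ.filter fun i => γ i ≠ 0).card ≤ s)
    (t : ℝ) (ht : 0 < t)
    (γT : Fin p → ℝ) (hγT : γT = fun i => if t ≤ |γ i| then γ i else 0)
    (hne : γT ≠ 0) :
    ∑ i, (γ i - γT i / Real.sqrt (∑ j, γT j ^ 2)) ^ 2 ≤ 2 * s * t ^ 2 := by
  have hne' : ∃ i, γT i ≠ 0 := by
    by_contra h; push_neg at h; exact hne (funext h)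
  obtain ⟨i0, hi0⟩ := hne'
  have hsq : ∀ i, γT i ^ 2 ≤ γ i ^ 2 := by
    intro i; rw [hγT]; dsimp only; split
    · exact le_rfl
    · simpa using sq_nonneg (γ i)
  have hmul : ∀ i, γ i * γT i = γT i ^ 2 := by
    intro i; rw [hγT]; dsimp only; split <;> ring
  set S := ∑ j, γT j ^ 2 with hSdef
  have hSpos : 0 < S :=
    Finset.sum_pos' (fun i _ => sq_nonneg _)
      ⟨i0, Finset.mem_univ _, by positivity⟩
  have hS1 : S ≤ 1 := hγ ▸ Finset.sum_le_sum (fun i _ => hsq i)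
  set a := Real.sqrt S with ha
  have hapos : 0 < a := Real.sqrt_pos.mpr hSpos
  have ha2 : a ^ 2 = S := Real.sq_sqrt hSpos.le
  have ha1 : a ≤ 1 := by nlinarith
  have hexp : ∑ i, (γ i - γT i / a) ^ 2 = 2 - 2 * a := by
    have key : ∀ i, (γ i - γT i / a) ^ 2
        = γ i ^ 2 - (2 / a) * γT i ^ 2 + (1 / a ^ 2) * γT i ^ 2 := by
      intro i
      have h : (γ i - γT i / a) ^ 2
          = γ i ^ 2 - (2 / a) * (γ i * γT i) + (1 / a ^ 2) * γT i ^ 2 := by ring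
      rw [h, hmul i]
    calc ∑ i, (γ i - γT i / a) ^ 2
        = ∑ i, (γ i ^ 2 - (2 / a) * γT i ^ 2 + (1 / a ^ 2) * γT i ^ 2) := by
          exact Finset.sum_congr rfl fun i _ => key i
      _ = (∑ i, γ i ^ 2) - (2 / a) * S + (1 / a ^ 2) * S := by
          rw [Finset.sum_add_distrib, Finset.sum_sub_distrib,
            ← Finset.mul_sum, ← Finset.mul_sum]
      _ = 2 - 2 * a := by
          rw [hγ]
          field_simp
          nlinarith [ha2]
  rw [hexp]
  have hres : 1 - S ≤ (s : ℝ) * t ^ 2 := by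
    have h1 : 1 - S = ∑ i, (γ i ^ 2 - γT i ^ 2) := by
      rw [Finset.sum_sub_distrib, hγ]
    rw [h1]
    calc ∑ i, (γ i ^ 2 - γT i ^ 2)
        ≤ ∑ i ∈ Finset.univ.filter (fun i => γ i ≠ 0), t ^ 2 := by
          rw [← Finset.sum_filter_add_sum_filter_not Finset.univ
            (fun i => γ i ≠ 0) (fun i => γ i ^ 2 - γT i ^ 2)]
          have h2 : ∑ i ∈ Finset.univ.filter (fun i => ¬ γ i ≠ 0),
              (γ i ^ 2 - γT i ^ 2) = 0 := by
            apply Finset.sum_eq_zero; intro i hi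
            simp only [Finset.mem_filter, not_not] at hi
            rw [hγT]; simp [hi.2]
          rw [h2, add_zero]
          apply Finset.sum_le_sum; intro i hi
          rw [hγT]; dsimp only; split
          · nlinarith [sq_nonneg t]
          · rename_i h; push_neg at h
            have h3 : |γ i| ^ 2 < t ^ 2 := by
              nlinarith [abs_nonneg (γ i)]
            rw [sq_abs] at h3
            nlinarith
      _ ≤ (s : ℝ) * t ^ 2 := by
          rw [Finset.sum_const, nsmul_eq_mul]
          have : ((Finset.univ.filter fun i => γ i ≠ 0).card : ℝ) ≤ (s : ℝ) := by
            exact_mod_cast hsupp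
          nlinarith [sq_nonneg t]
  nlinarith
end

section
/- Let 1 ≤ d ≤ p. There exist a nonempty subset U of G(p,d) := {AAᵀ : A is a p×d real matrix with AᵀA = I_d}, relatively open in G(p,d) inside the space of p×p matrices with the Frobenius norm topology, a map σ : U → {A ∈ ℝ^{p×d} : AᵀA = I_d} with σ(u)σ(u)ᵀ = u for every u ∈ U, and constants C₁, C₂ > 0 such that for all u₁, u₂ ∈ U, C₁‖u₁ − u₂‖_F ≤ ‖σ(u₁) − σ(u₂)‖_F ≤ C₂‖u₁ − u₂‖_F. -/
/-!
Fix the frame `E` of the first `d` coordinate vectors. For `u ∈ G(p,d)` close to `E Eᵀ`, the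
compression `M = Eᵀ u E` is close to the identity, so its spectrum lies in `[1/2, ∞)`, and
`σ(u) = u E M^{-1/2}` is the orthonormal polar factor of `u E`: writing `u = A Aᵀ`, one has
`σ(u) = A Q` with `Q = (Eᵀ A)ᵀ M^{-1/2}` orthogonal, so `σ(u) σ(u)ᵀ = u`.

The lower Lipschitz bound comes from `u₁ - u₂ = σ₁ (σ₁ - σ₂)ᵀ + (σ₁ - σ₂) σ₂ᵀ`. For the upper
bound, the square root is Lipschitz on matrices `S ≥ c`: for `D = S₁ - S₂`,
`tr (D (S₁² - S₂²)) = tr (D S₁ D) + tr (D S₂ D) ≥ 2 c ‖D‖²`, while the left side is at most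
`‖D‖ ‖S₁² - S₂²‖`; the same trace estimate bounds `‖S⁻¹‖`.
-/

open Matrix

/-- The Grassmannian `G(p,d)`, viewed as the set of matrices `AAᵀ` for `p×d` matrices `A`
with orthonormal columns (i.e. the rank-`d` orthogonal projection matrices). -/
def grassmannian (p d : ℕ) : Set (Matrix (Fin p) (Fin p) ℝ) :=
  {u | ∃ A : Matrix (Fin p) (Fin d) ℝ, Aᵀ * A = 1 ∧ A * Aᵀ = u}

section

open scoped MatrixOrder Matrix.Norms.Frobenius

theorem spectrum.norm_sub_le_of_mem {𝕜 A : Type*} [NormedField 𝕜] [NormedRing A]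
    [NormedAlgebra 𝕜 A] [CompleteSpace A] {a : A} {k : 𝕜} (hk : k ∈ spectrum 𝕜 a) (r : 𝕜) :
    ‖k - r‖ ≤ ‖a - algebraMap 𝕜 A r‖ * ‖(1 : A)‖ :=
  spectrum.norm_le_norm_mul_of_mem <| by
    rw [← spectrum.sub_singleton_eq]; exact Set.sub_mem_sub hk rfl

namespace Matrix

variable {m n : Type*} [Fintype m] [Fintype n]

theorem frobenius_sum_mul_le (A B : Matrix m n ℝ) :
    ∑ i, ∑ j, A i j * B i j ≤ ‖A‖ * ‖B‖ := by
  have := real_inner_le_norm (WithLp.toLp 2 fun i => WithLp.toLp 2 (A i))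
    (WithLp.toLp 2 fun i => WithLp.toLp 2 (B i))
  simp only [PiLp.inner_apply, RCLike.inner_apply, conj_trivial, mul_comm (B _ _)] at this
  exact this

theorem frobenius_norm_sq (A : Matrix m n ℝ) : ‖A‖ ^ 2 = (A * Aᵀ).trace := by
  have := real_inner_self_eq_norm_sq (WithLp.toLp 2 fun i => WithLp.toLp 2 (A i))
  simp only [PiLp.inner_apply, RCLike.inner_apply, conj_trivial] at this
  refine this.symm.trans ?_
  simp [trace, mul_apply]

theorem trace_mul_le_frobenius (A : Matrix m n ℝ) (B : Matrix n m ℝ) :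
    (A * B).trace ≤ ‖A‖ * ‖B‖ := by
  rw [← frobenius_norm_transpose B]
  convert frobenius_sum_mul_le A Bᵀ using 1
  simp [trace, mul_apply]

theorem frobenius_norm_eq_norm_one [DecidableEq n] {A : Matrix m n ℝ} (hA : Aᵀ * A = 1) :
    ‖A‖ = ‖(1 : Matrix n n ℝ)‖ := by
  rw [← sq_eq_sq₀ (norm_nonneg _) (norm_nonneg _), frobenius_norm_sq, frobenius_norm_sq,
    trace_mul_comm, hA, transpose_one, one_mul]

theorem norm_mul_transpose_sub_le [DecidableEq n] {A B : Matrix m n ℝ} (hA : Aᵀ * A = 1)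
    (hB : Bᵀ * B = 1) : ‖A * Aᵀ - B * Bᵀ‖ ≤ 2 * ‖(1 : Matrix n n ℝ)‖ * ‖A - B‖ := by
  have hsplit : A * Aᵀ - B * Bᵀ = A * (A - B)ᵀ + (A - B) * Bᵀ := by
    rw [transpose_sub, Matrix.mul_sub, Matrix.sub_mul]; abel
  calc ‖A * Aᵀ - B * Bᵀ‖ ≤ ‖A‖ * ‖(A - B)ᵀ‖ + ‖A - B‖ * ‖Bᵀ‖ := by
        rw [hsplit]
        exact (norm_add_le _ _).trans (add_le_add (frobenius_norm_mul _ _) (frobenius_norm_mul _ _))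
    _ = 2 * ‖(1 : Matrix n n ℝ)‖ * ‖A - B‖ := by
        rw [frobenius_norm_transpose, frobenius_norm_transpose, frobenius_norm_eq_norm_one hA,
          frobenius_norm_eq_norm_one hB]
        ring

theorem isSelfAdjoint_transpose_mul_mul {l : Type*} {u : Matrix m m ℝ} (hu : uᵀ = u)
    (E : Matrix m l ℝ) : IsSelfAdjoint (Eᵀ * u * E) := by
  rw [← conjTranspose_eq_transpose_of_trivial] at hu ⊢
  exact (isHermitian_conjTranspose_mul_mul E hu).isSelfAdjoint

theorem transpose_mul_self_submatrix_one {l : Type*} [DecidableEq m] [DecidableEq l] {f : l → m}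
    (hf : Function.Injective f) :
    ((1 : Matrix m m ℝ).submatrix id f)ᵀ * (1 : Matrix m m ℝ).submatrix id f = 1 := by
  rw [transpose_submatrix, transpose_one, ← submatrix_mul _ _ _ _ _ Function.bijective_id,
    Matrix.one_mul, submatrix_one f hf]

variable [DecidableEq n]

theorem isHermitian_of_algebraMap_le {c : ℝ} {S : Matrix n n ℝ} (hS : algebraMap ℝ _ c ≤ S) :
    S.IsHermitian := by
  simpa [Algebra.algebraMap_eq_smul_one] using
    (le_iff.mp hS).isHermitian.add (isHermitian_one.smul (IsSelfAdjoint.all c))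

theorem posDef_of_algebraMap_le {c : ℝ} (hc : 0 < c) {S : Matrix n n ℝ}
    (hS : algebraMap ℝ _ c ≤ S) : S.PosDef := by
  simpa [Algebra.algebraMap_eq_smul_one] using (PosDef.one.smul hc).posSemidef_add (le_iff.mp hS)

theorem mul_norm_sq_le_trace_mul_mul_transpose {c : ℝ} {S : Matrix n n ℝ}
    (hS : algebraMap ℝ _ c ≤ S) (D : Matrix m n ℝ) : c * ‖D‖ ^ 2 ≤ (D * S * Dᵀ).trace := by
  have hpsd := (le_iff.mp hS).mul_mul_conjTranspose_same D
  rw [conjTranspose_eq_transpose_of_trivial] at hpsd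
  rw [frobenius_norm_sq]
  simpa [Matrix.mul_sub, Matrix.sub_mul, trace_sub, Algebra.algebraMap_eq_smul_one, trace_smul]
    using hpsd.trace_nonneg

theorem two_mul_norm_sub_le_norm_mul_self_sub {c : ℝ} {S₁ S₂ : Matrix n n ℝ}
    (h₁ : algebraMap ℝ _ c ≤ S₁) (h₂ : algebraMap ℝ _ c ≤ S₂) :
    2 * c * ‖S₁ - S₂‖ ≤ ‖S₁ * S₁ - S₂ * S₂‖ := by
  set D := S₁ - S₂
  have hD : Dᵀ = D := by
    rw [← conjTranspose_eq_transpose_of_trivial]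
    exact ((isHermitian_of_algebraMap_le h₁).sub (isHermitian_of_algebraMap_le h₂)).eq
  have htrace : (D * (S₁ * S₁ - S₂ * S₂)).trace = (D * S₁ * Dᵀ).trace + (D * S₂ * Dᵀ).trace := by
    have : S₁ * S₁ - S₂ * S₂ = S₁ * D + D * S₂ := by
      simp only [D, Matrix.mul_sub, Matrix.sub_mul]; abel
    rw [this, Matrix.mul_add, trace_add, hD, ← Matrix.mul_assoc, trace_mul_comm D (D * S₂)]
  have key : 2 * c * ‖D‖ * ‖D‖ ≤ ‖S₁ * S₁ - S₂ * S₂‖ * ‖D‖ := by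
    nlinarith [trace_mul_le_frobenius D (S₁ * S₁ - S₂ * S₂),
      mul_norm_sq_le_trace_mul_mul_transpose h₁ D, mul_norm_sq_le_trace_mul_mul_transpose h₂ D]
  rcases (norm_nonneg D).eq_or_lt with h | h
  · rw [← h]; simp
  · exact le_of_mul_le_mul_right key h

theorem mul_norm_inv_le {c : ℝ} (hc : 0 < c) {S : Matrix n n ℝ} (hS : algebraMap ℝ _ c ≤ S) :
    c * ‖S⁻¹‖ ≤ ‖(1 : Matrix n n ℝ)‖ := by
  have hunit := (isUnit_iff_isUnit_det S).mp (posDef_of_algebraMap_le hc hS).isUnit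
  have hsymm : S⁻¹ᵀ = S⁻¹ := by
    rw [transpose_nonsing_inv, ← conjTranspose_eq_transpose_of_trivial,
      (isHermitian_of_algebraMap_le hS).eq]
  have key : c * ‖S⁻¹‖ * ‖S⁻¹‖ ≤ ‖(1 : Matrix n n ℝ)‖ * ‖S⁻¹‖ := by
    have hlow := mul_norm_sq_le_trace_mul_mul_transpose hS S⁻¹
    rw [hsymm, nonsing_inv_mul _ hunit, Matrix.one_mul] at hlow
    have hup := trace_mul_le_frobenius (1 : Matrix n n ℝ) S⁻¹
    rw [Matrix.one_mul] at hup
    nlinarith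
  rcases (norm_nonneg S⁻¹).eq_or_lt with h | h
  · rw [← h]; simp
  · exact le_of_mul_le_mul_right key h

theorem cfc_sqrt_mul_self {M : Matrix n n ℝ} (hM : IsSelfAdjoint M)
    (hspec : ∀ k ∈ spectrum ℝ M, 0 ≤ k) : cfc Real.sqrt M * cfc Real.sqrt M = M := by
  rw [← cfc_mul Real.sqrt Real.sqrt M, cfc_congr fun k hk => Real.mul_self_sqrt (hspec k hk),
    cfc_id' ℝ M]

theorem algebraMap_le_cfc_sqrt {c : ℝ} {M : Matrix n n ℝ} (hM : IsSelfAdjoint M)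
    (hspec : ∀ k ∈ spectrum ℝ M, c ^ 2 ≤ k) : algebraMap ℝ _ c ≤ cfc Real.sqrt M :=
  (algebraMap_le_cfc_iff Real.sqrt c M).mpr fun k hk => Real.le_sqrt_of_sq_le (hspec k hk)

theorem transpose_mul_inv_transpose_mul_self {l : Type*} [Fintype l] {S : Matrix n n ℝ}
    {B : Matrix n l ℝ} (hS : Sᵀ = S) (hunit : IsUnit S.det) (h : S * S = B * Bᵀ) :
    (Bᵀ * S⁻¹)ᵀ * (Bᵀ * S⁻¹) = 1 := by
  rw [transpose_mul, transpose_transpose, transpose_nonsing_inv, hS]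
  calc S⁻¹ * B * (Bᵀ * S⁻¹) = S⁻¹ * (S * S) * S⁻¹ := by rw [h]; simp only [Matrix.mul_assoc]
    _ = 1 := by
      rw [← Matrix.mul_assoc, nonsing_inv_mul _ hunit, Matrix.one_mul, mul_nonsing_inv _ hunit]

theorem mul_inv_sub_mul_inv {l : Type*} {X₁ X₂ : Matrix l n ℝ} {S₁ S₂ : Matrix n n ℝ}
    (h₁ : IsUnit S₁.det) (h₂ : IsUnit S₂.det) :
    X₁ * S₁⁻¹ - X₂ * S₂⁻¹ = (X₁ - X₂ + X₂ * S₂⁻¹ * (S₂ - S₁)) * S₁⁻¹ := by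
  rw [Matrix.mul_sub, Matrix.mul_assoc X₂ S₂⁻¹ S₂, nonsing_inv_mul _ h₂, Matrix.mul_one,
    Matrix.add_mul, Matrix.sub_mul, Matrix.sub_mul, Matrix.mul_assoc (X₂ * S₂⁻¹) S₁,
    mul_nonsing_inv _ h₁, Matrix.mul_one]
  abel

end Matrix

variable {m n : Type*} [Fintype m] [Fintype n] [DecidableEq n]

/-- The factor `‖1‖ = √n` is there because the Frobenius norm is not normalized
(`spectrum.norm_sub_le_of_mem`). -/
def polarDomain (E : Matrix m n ℝ) : Set (Matrix m m ℝ) :=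
  {u | ‖Eᵀ * u * E - 1‖ * ‖(1 : Matrix n n ℝ)‖ < 1 / 2}

noncomputable def polarRoot (E : Matrix m n ℝ) (u : Matrix m m ℝ) : Matrix n n ℝ :=
  cfc Real.sqrt (Eᵀ * u * E)

noncomputable def polarSection (E : Matrix m n ℝ) (u : Matrix m m ℝ) : Matrix m n ℝ :=
  u * E * (polarRoot E u)⁻¹

variable {E : Matrix m n ℝ}

theorem isOpen_polarDomain (E : Matrix m n ℝ) : IsOpen (polarDomain E) :=
  isOpen_lt (by fun_prop) continuous_const

theorem mul_transpose_mem_polarDomain (hE : Eᵀ * E = 1) : E * Eᵀ ∈ polarDomain E := by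
  simp [polarDomain, hE, Matrix.mul_assoc]

theorem half_le_of_mem_spectrum_of_mem_polarDomain {u : Matrix m m ℝ} (hW : u ∈ polarDomain E)
    {k : ℝ} (hk : k ∈ spectrum ℝ (Eᵀ * u * E)) : 1 / 2 ≤ k := by
  have := spectrum.norm_sub_le_of_mem hk 1
  rw [map_one, Real.norm_eq_abs] at this
  linarith [abs_sub_lt_iff.mp (this.trans_lt hW)]

theorem polarRoot_mul_self {u : Matrix m m ℝ} (hu : uᵀ = u) (hW : u ∈ polarDomain E) :
    polarRoot E u * polarRoot E u = Eᵀ * u * E :=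
  cfc_sqrt_mul_self (isSelfAdjoint_transpose_mul_mul hu E) fun k hk => by
    linarith [half_le_of_mem_spectrum_of_mem_polarDomain hW hk]

theorem algebraMap_half_le_polarRoot {u : Matrix m m ℝ} (hu : uᵀ = u) (hW : u ∈ polarDomain E) :
    algebraMap ℝ _ (1 / 2) ≤ polarRoot E u :=
  algebraMap_le_cfc_sqrt (isSelfAdjoint_transpose_mul_mul hu E) fun k hk => by
    linarith [half_le_of_mem_spectrum_of_mem_polarDomain hW hk]

theorem isUnit_det_polarRoot {u : Matrix m m ℝ} (hu : uᵀ = u) (hW : u ∈ polarDomain E) :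
    IsUnit (polarRoot E u).det :=
  (isUnit_iff_isUnit_det _).mp
    (posDef_of_algebraMap_le (by norm_num) (algebraMap_half_le_polarRoot hu hW)).isUnit

theorem polarSection_spec {A : Matrix m n ℝ} (hA : Aᵀ * A = 1) (hW : A * Aᵀ ∈ polarDomain E) :
    (polarSection E (A * Aᵀ))ᵀ * polarSection E (A * Aᵀ) = 1 ∧
      polarSection E (A * Aᵀ) * (polarSection E (A * Aᵀ))ᵀ = A * Aᵀ := by
  have hu : (A * Aᵀ)ᵀ = A * Aᵀ := by rw [transpose_mul, transpose_transpose]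
  set S := polarRoot E (A * Aᵀ)
  have hQ : ((Eᵀ * A)ᵀ * S⁻¹)ᵀ * ((Eᵀ * A)ᵀ * S⁻¹) = 1 := by
    refine transpose_mul_inv_transpose_mul_self ?_ (isUnit_det_polarRoot hu hW) ?_
    · rw [← conjTranspose_eq_transpose_of_trivial]
      exact (isHermitian_of_algebraMap_le (algebraMap_half_le_polarRoot hu hW)).eq
    · rw [polarRoot_mul_self hu hW]
      simp only [transpose_mul, transpose_transpose, Matrix.mul_assoc]
  have hσ : polarSection E (A * Aᵀ) = A * ((Eᵀ * A)ᵀ * S⁻¹) := by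
    simp only [polarSection, S, transpose_mul, transpose_transpose, Matrix.mul_assoc]
  generalize (Eᵀ * A)ᵀ * S⁻¹ = Q at hQ hσ
  rw [hσ, transpose_mul]
  constructor
  · rw [Matrix.mul_assoc, ← Matrix.mul_assoc Aᵀ, hA, Matrix.one_mul, hQ]
  · rw [Matrix.mul_assoc, ← Matrix.mul_assoc Q, mul_eq_one_comm.mp hQ, Matrix.one_mul]

theorem norm_polarSection_sub_le {u₁ : Matrix m m ℝ} {A₂ : Matrix m n ℝ} (hE : Eᵀ * E = 1)
    (hu₁ : u₁ᵀ = u₁) (hW₁ : u₁ ∈ polarDomain E)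
    (hA₂ : A₂ᵀ * A₂ = 1) (hW₂ : A₂ * A₂ᵀ ∈ polarDomain E) :
    ‖polarSection E u₁ - polarSection E (A₂ * A₂ᵀ)‖ ≤
      2 * ‖(1 : Matrix n n ℝ)‖ ^ 2 * (1 + ‖(1 : Matrix n n ℝ)‖ ^ 2) * ‖u₁ - A₂ * A₂ᵀ‖ := by
  set u₂ := A₂ * A₂ᵀ
  set r := ‖(1 : Matrix n n ℝ)‖
  have hu₂ : u₂ᵀ = u₂ := by rw [transpose_mul, transpose_transpose]
  have hS₁ := algebraMap_half_le_polarRoot hu₁ hW₁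
  have hnormE : ‖E‖ = r := frobenius_norm_eq_norm_one hE
  have hroot : ‖polarRoot E u₂ - polarRoot E u₁‖ ≤ r ^ 2 * ‖u₁ - u₂‖ := by
    have := two_mul_norm_sub_le_norm_mul_self_sub (algebraMap_half_le_polarRoot hu₂ hW₂) hS₁
    rw [polarRoot_mul_self hu₁ hW₁, polarRoot_mul_self hu₂ hW₂, ← Matrix.sub_mul,
      ← Matrix.mul_sub] at this
    calc ‖polarRoot E u₂ - polarRoot E u₁‖ ≤ ‖Eᵀ * (u₂ - u₁) * E‖ := by linarith
      _ ≤ ‖Eᵀ‖ * ‖u₂ - u₁‖ * ‖E‖ :=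
        (frobenius_norm_mul _ _).trans (by gcongr; exact frobenius_norm_mul _ _)
      _ = r ^ 2 * ‖u₁ - u₂‖ := by rw [frobenius_norm_transpose, hnormE, norm_sub_rev]; ring
  have hinv : ‖(polarRoot E u₁)⁻¹‖ ≤ 2 * r := by
    linarith [mul_norm_inv_le (by norm_num) hS₁]
  calc ‖polarSection E u₁ - polarSection E u₂‖
      = ‖((u₁ - u₂) * E + polarSection E u₂ * (polarRoot E u₂ - polarRoot E u₁)) *
          (polarRoot E u₁)⁻¹‖ := by
        rw [polarSection, polarSection,
          mul_inv_sub_mul_inv (isUnit_det_polarRoot hu₁ hW₁) (isUnit_det_polarRoot hu₂ hW₂),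
          ← Matrix.sub_mul]
    _ ≤ (‖u₁ - u₂‖ * ‖E‖ + ‖polarSection E u₂‖ * ‖polarRoot E u₂ - polarRoot E u₁‖) *
          ‖(polarRoot E u₁)⁻¹‖ :=
        (frobenius_norm_mul _ _).trans (by
          gcongr
          exact (norm_add_le _ _).trans
            (add_le_add (frobenius_norm_mul _ _) (frobenius_norm_mul _ _)))
    _ ≤ (‖u₁ - u₂‖ * r + r * (r ^ 2 * ‖u₁ - u₂‖)) * (2 * r) := by
        rw [hnormE, frobenius_norm_eq_norm_one (polarSection_spec hA₂ hW₂).1]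
        gcongr
    _ = 2 * r ^ 2 * (1 + r ^ 2) * ‖u₁ - u₂‖ := by ring

theorem frobNorm_eq_norm_s9 {l : Type*} [Fintype l] (M : Matrix m l ℝ) : frobNorm M = ‖M‖ := by
  rw [frobNorm, ← frobenius_norm_sq, Real.sqrt_sq (norm_nonneg M)]

theorem exists_bilipschitz_polarSection (hE : Eᵀ * E = 1) :
    ∃ C₁ C₂ : ℝ, 0 < C₁ ∧ 0 < C₂ ∧ ∀ ⦃A₁ A₂ : Matrix m n ℝ⦄,
      A₁ᵀ * A₁ = 1 → A₁ * A₁ᵀ ∈ polarDomain E → A₂ᵀ * A₂ = 1 → A₂ * A₂ᵀ ∈ polarDomain E →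
        C₁ * frobNorm (A₁ * A₁ᵀ - A₂ * A₂ᵀ) ≤
            frobNorm (polarSection E (A₁ * A₁ᵀ) - polarSection E (A₂ * A₂ᵀ)) ∧
          frobNorm (polarSection E (A₁ * A₁ᵀ) - polarSection E (A₂ * A₂ᵀ)) ≤
            C₂ * frobNorm (A₁ * A₁ᵀ - A₂ * A₂ᵀ) := by
  set r := ‖(1 : Matrix n n ℝ)‖
  refine ⟨(2 * r + 1)⁻¹, 2 * r ^ 2 * (1 + r ^ 2) + 1, by positivity, by positivity,
    fun A₁ A₂ hA₁ hW₁ hA₂ hW₂ => ?_⟩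
  simp only [frobNorm_eq_norm_s9]
  obtain ⟨hσ₁, hσσ₁⟩ := polarSection_spec hA₁ hW₁
  obtain ⟨hσ₂, hσσ₂⟩ := polarSection_spec hA₂ hW₂
  have hlower := norm_mul_transpose_sub_le hσ₁ hσ₂
  rw [hσσ₁, hσσ₂] at hlower
  have hupper :=
    norm_polarSection_sub_le hE (by rw [transpose_mul, transpose_transpose]) hW₁ hA₂ hW₂
  constructor
  · rw [inv_mul_le_iff₀ (by positivity)]
    nlinarith [norm_nonneg (polarSection E (A₁ * A₁ᵀ) - polarSection E (A₂ * A₂ᵀ))]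
  · nlinarith [norm_nonneg (A₁ * A₁ᵀ - A₂ * A₂ᵀ)]

end

theorem exists_bilipschitz_section_grassmannian_general (p d : ℕ) (hdp : d ≤ p) :
    ∃ U : Set (Matrix (Fin p) (Fin p) ℝ),
      U.Nonempty ∧ U ⊆ grassmannian p d ∧
      (∃ W : Set (Matrix (Fin p) (Fin p) ℝ), IsOpen W ∧ U = W ∩ grassmannian p d) ∧
      ∃ σ : Matrix (Fin p) (Fin p) ℝ → Matrix (Fin p) (Fin d) ℝ,
        (∀ u ∈ U, (σ u)ᵀ * σ u = 1 ∧ σ u * (σ u)ᵀ = u) ∧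
        ∃ C₁ C₂ : ℝ, 0 < C₁ ∧ 0 < C₂ ∧
          ∀ u₁ ∈ U, ∀ u₂ ∈ U,
            C₁ * frobNorm (u₁ - u₂) ≤ frobNorm (σ u₁ - σ u₂) ∧
            frobNorm (σ u₁ - σ u₂) ≤ C₂ * frobNorm (u₁ - u₂) := by
  obtain ⟨E, hE⟩ : ∃ E : Matrix (Fin p) (Fin d) ℝ, Eᵀ * E = 1 :=
    ⟨_, transpose_mul_self_submatrix_one (Fin.castLE_injective hdp)⟩
  obtain ⟨C₁, C₂, hC₁, hC₂, hσ⟩ := exists_bilipschitz_polarSection hE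
  refine ⟨polarDomain E ∩ grassmannian p d, ⟨E * Eᵀ, mul_transpose_mem_polarDomain hE, E, hE, rfl⟩,
    Set.inter_subset_right, ⟨_, isOpen_polarDomain E, rfl⟩, polarSection E, ?_,
    C₁, C₂, hC₁, hC₂, ?_⟩
  · rintro _ ⟨hW, A, hA, rfl⟩
    exact polarSection_spec hA hW
  · rintro _ ⟨hW₁, A₁, hA₁, rfl⟩ _ ⟨hW₂, A₂, hA₂, rfl⟩
    exact hσ hA₁ hW₁ hA₂ hW₂

/-- For `1 ≤ d ≤ p` there exist a nonempty subset `U` of `G(p,d)`, relatively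
open in `G(p,d)` (for the Frobenius-norm topology of `ℝ^{p×p}`), a section
`σ : U → {A : AᵀA = I_d}` of the tautological map `A ↦ AAᵀ`, and constants `C₁, C₂ > 0` such
that `C₁‖u₁ − u₂‖_F ≤ ‖σ(u₁) − σ(u₂)‖_F ≤ C₂‖u₁ − u₂‖_F` for all `u₁, u₂ ∈ U`. -/
theorem exists_bilipschitz_section_grassmannian (p d : ℕ) (hd : 1 ≤ d) (hdp : d ≤ p) :
    ∃ U : Set (Matrix (Fin p) (Fin p) ℝ),
      U.Nonempty ∧ U ⊆ grassmannian p d ∧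
      (∃ W : Set (Matrix (Fin p) (Fin p) ℝ), IsOpen W ∧ U = W ∩ grassmannian p d) ∧
      ∃ σ : Matrix (Fin p) (Fin p) ℝ → Matrix (Fin p) (Fin d) ℝ,
        (∀ u ∈ U, (σ u)ᵀ * σ u = 1 ∧ σ u * (σ u)ᵀ = u) ∧
        ∃ C₁ C₂ : ℝ, 0 < C₁ ∧ 0 < C₂ ∧
          ∀ u₁ ∈ U, ∀ u₂ ∈ U,
            C₁ * frobNorm (u₁ - u₂) ≤ frobNorm (σ u₁ - σ u₂) ∧
            frobNorm (σ u₁ - σ u₂) ≤ C₂ * frobNorm (u₁ - u₂) :=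
  exists_bilipschitz_section_grassmannian_general p d hdp
end

section
/- Let g : ℝ^d → ℝ be Lipschitz with constant L (in particular differentiable with ‖∇g‖ ≤ L suffices). Let x be a standard Gaussian random vector in ℝ^p (i.i.d. N(0,1) coordinates) and ε ~ N(0,1) independent of x. For a p×d real matrix B with BᵀB = I_d, let μ_{B,g} denote the joint law on ℝ × ℝ^p of (g(Bᵀx) + ε, x). Then for any two p×d matrices B, B′ with BᵀB = B′ᵀB′ = I_d, the Kullback–Leibler divergence satisfies KL(μ_{B,g}, μ_{B′,g}) ≤ L² ‖B − B′‖_F². -/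
/-!
Write `γ` for the law of `x`, `a = g ∘ Bᵀ` and `b = g ∘ B'ᵀ`. Both laws are images of `γ ⊗ N(0,1)`
under `(v, e) ↦ (a v + e, v)`; given `x = v` the response is `N(a v, 1)`, resp. `N(b v, 1)`, so the
likelihood ratio is `exp (((y - b v)² - (y - a v)²) / 2)`. Integrating its logarithm gives
`KL = E[(a x - b x)²] / 2`. The Lipschitz bound gives `(a v - b v)² ≤ L² ‖(B - B')ᵀ v‖²`, and for a
standard Gaussian vector `E ‖M x‖² = tr (M Mᵀ)`, which for `M = (B - B')ᵀ` is `‖B - B'‖_F²`.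
-/

open Matrix MeasureTheory ProbabilityTheory

/-- Kullback–Leibler divergence `KL(μ, ν) = ∫ log(dμ/dν) dμ` (for `μ ≪ ν`). -/
noncomputable def klDiv {E : Type*} [MeasurableSpace E] (μ ν : Measure E) : ℝ :=
  ∫ x, Real.log (μ.rnDeriv ν x).toReal ∂μ

open Real
open scoped ENNReal NNReal

lemma frobNorm_sq_s12 {m n : Type*} [Fintype m] [Fintype n] (M : Matrix m n ℝ) :
    frobNorm M ^ 2 = trace (M * Mᵀ) :=
  sq_sqrt (by simpa using (posSemidef_self_mul_conjTranspose M).trace_nonneg)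

lemma continuous_of_abs_sub_le_mul_sqrt {ι : Type*} [Fintype ι] {g : (ι → ℝ) → ℝ} {L : ℝ}
    (hg : ∀ v w, |g v - g w| ≤ L * √(∑ i, (v i - w i) ^ 2)) : Continuous g := by
  have hlip : LipschitzWith L.toNNReal fun v : EuclideanSpace ℝ ι => g v := by
    refine LipschitzWith.of_dist_le_mul fun v w => ?_
    rw [Real.dist_eq, EuclideanSpace.dist_eq, Real.coe_toNNReal']
    simp only [Real.dist_eq, sq_abs]
    exact (hg v w).trans (mul_le_mul_of_nonneg_right (le_max_left _ _) (sqrt_nonneg _))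
  exact hlip.continuous.comp (PiLp.continuous_toLp 2 _)

lemma sq_sub_le_mul_sum_sq_mulVec {ι κ : Type*} [Fintype ι] [Fintype κ] {g : (κ → ℝ) → ℝ} {L : ℝ}
    (hg : ∀ v w, |g v - g w| ≤ L * √(∑ i, (v i - w i) ^ 2)) (C C' : Matrix κ ι ℝ) (v : ι → ℝ) :
    (g (C *ᵥ v) - g (C' *ᵥ v)) ^ 2 ≤ L ^ 2 * ∑ j, ((C - C') *ᵥ v) j ^ 2 := by
  have h : |g (C *ᵥ v) - g (C' *ᵥ v)| ≤ L * √(∑ j, ((C - C') *ᵥ v) j ^ 2) := by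
    simpa only [sub_mulVec, Pi.sub_apply] using hg (C *ᵥ v) (C' *ᵥ v)
  calc (g (C *ᵥ v) - g (C' *ᵥ v)) ^ 2 ≤ (L * √(∑ j, ((C - C') *ᵥ v) j ^ 2)) ^ 2 :=
        sq_le_sq' (neg_le_of_abs_le h) (le_of_abs_le h)
    _ = L ^ 2 * ∑ j, ((C - C') *ᵥ v) j ^ 2 := by
        rw [mul_pow, sq_sqrt (Finset.sum_nonneg fun j _ => sq_nonneg _)]

section StdGaussianPi

variable {ι : Type*} [Fintype ι]

lemma memLp_dotProduct_pi_gaussianReal (t : ι → ℝ) :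
    MemLp (fun v => t ⬝ᵥ v) 2 (Measure.pi fun _ : ι => gaussianReal 0 1) :=
  memLp_finsetSum _ fun i _ =>
    ((memLp_id_gaussianReal 2).comp_measurePreserving (measurePreserving_eval _ i)).const_mul _

lemma integral_dotProduct_pi_gaussianReal (t : ι → ℝ) :
    ∫ v, t ⬝ᵥ v ∂(Measure.pi fun _ : ι => gaussianReal 0 1) = 0 := by
  simp_rw [dotProduct]
  rw [integral_finsetSum _ fun i _ => (integrable_eval IsGaussian.integrable_id).const_mul _]
  simp [integral_const_mul, integral_eval, integral_id_gaussianReal]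

lemma integral_dotProduct_sq_pi_gaussianReal (t : ι → ℝ) :
    ∫ v, (t ⬝ᵥ v) ^ 2 ∂(Measure.pi fun _ : ι => gaussianReal 0 1) = t ⬝ᵥ t := by
  have hsum : (fun v : ι → ℝ => t ⬝ᵥ v) = ∑ i, fun v => t i * v i := by
    ext v; simp [dotProduct]
  have hvar : ∀ i, MemLp (fun y : ℝ => t i * y) 2 (gaussianReal 0 1) :=
    fun i => (memLp_id_gaussianReal 2).const_mul (t i)
  rw [← variance_of_integral_eq_zero (memLp_dotProduct_pi_gaussianReal t).aemeasurable
    (integral_dotProduct_pi_gaussianReal t), hsum, variance_sum_pi hvar]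
  refine Finset.sum_congr rfl fun i _ => ?_
  simpa [sq] using variance_const_mul (t i) id (gaussianReal 0 1)

variable {κ : Type*} [Fintype κ]

lemma integrable_sum_sq_mulVec_pi_gaussianReal (M : Matrix κ ι ℝ) :
    Integrable (fun v => ∑ j, (M *ᵥ v) j ^ 2) (Measure.pi fun _ : ι => gaussianReal 0 1) :=
  integrable_finsetSum _ fun j _ => (memLp_dotProduct_pi_gaussianReal (M j)).integrable_sq

lemma integral_sum_sq_mulVec_pi_gaussianReal (M : Matrix κ ι ℝ) :
    ∫ v, ∑ j, (M *ᵥ v) j ^ 2 ∂(Measure.pi fun _ : ι => gaussianReal 0 1) = trace (M * Mᵀ) := by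
  rw [integral_finsetSum (f := fun j v => (M *ᵥ v) j ^ 2) _
    fun j _ => (memLp_dotProduct_pi_gaussianReal (M j)).integrable_sq]
  exact Finset.sum_congr rfl fun j _ => integral_dotProduct_sq_pi_gaussianReal (M j)

end StdGaussianPi

lemma gaussianReal_eq_withDensity_gaussianReal (m m' : ℝ) {v : ℝ≥0} (hv : v ≠ 0) :
    gaussianReal m v = (gaussianReal m' v).withDensity
      fun y => ENNReal.ofReal (exp (((y - m') ^ 2 - (y - m) ^ 2) / (2 * v))) := by
  rw [gaussianReal_of_var_ne_zero m hv, gaussianReal_of_var_ne_zero m' hv,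
    ← withDensity_mul _ (measurable_gaussianPDF m' v) (by fun_prop)]
  congr 1
  ext y
  simp only [gaussianPDF, gaussianPDFReal, Pi.mul_apply]
  rw [← ENNReal.ofReal_mul (by positivity), mul_assoc _ (rexp _), ← exp_add]
  congr 3
  ring

lemma klDiv_withDensity_exp {E : Type*} [MeasurableSpace E] (ν : Measure E) [SigmaFinite ν]
    {φ : E → ℝ} (hφ : Measurable φ) :
    klDiv (ν.withDensity fun x => ENNReal.ofReal (exp (φ x))) ν
      = ∫ x, φ x ∂ν.withDensity fun x => ENNReal.ofReal (exp (φ x)) := by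
  refine integral_congr_ae ?_
  filter_upwards [withDensity_absolutelyContinuous ν _ |>.ae_le
    (Measure.rnDeriv_withDensity ν hφ.exp.ennreal_ofReal)] with x hx
  rw [hx, ENNReal.toReal_ofReal (exp_nonneg _), log_exp]

section RegressionLaw

variable {X : Type*} [MeasurableSpace X]

noncomputable def regressionLaw (γ : Measure X) (a : X → ℝ) : Measure (ℝ × X) :=
  (γ.prod (gaussianReal 0 1)).map fun q => (a q.1 + q.2, q.1)

lemma lintegral_regressionLaw (γ : Measure X) {a : X → ℝ} (ha : Measurable a)
    {f : ℝ × X → ℝ≥0∞} (hf : Measurable f) :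
    ∫⁻ q, f q ∂regressionLaw γ a = ∫⁻ v, ∫⁻ y, f (y, v) ∂gaussianReal (a v) 1 ∂γ := by
  rw [regressionLaw, lintegral_map hf (by fun_prop), lintegral_prod _ (by fun_prop)]
  refine lintegral_congr fun v => ?_
  rw [← zero_add (a v), ← gaussianReal_map_const_add, lintegral_map (by fun_prop) (by fun_prop)]

lemma regressionLaw_eq_withDensity (γ : Measure X) {a b : X → ℝ} (ha : Measurable a)
    (hb : Measurable b) :
    regressionLaw γ a = (regressionLaw γ b).withDensity
      fun q => ENNReal.ofReal (exp (((q.1 - b q.2) ^ 2 - (q.1 - a q.2) ^ 2) / 2)) := by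
  ext s hs
  rw [withDensity_apply _ hs, ← lintegral_indicator_one hs, ← lintegral_indicator hs,
    lintegral_regressionLaw γ ha (measurable_one.indicator hs),
    lintegral_regressionLaw γ hb ((by fun_prop : Measurable _).indicator hs)]
  refine lintegral_congr fun v => ?_
  have hsv : Measurable fun y => s.indicator (1 : ℝ × X → ℝ≥0∞) (y, v) :=
    (measurable_one.indicator hs).comp measurable_prodMk_right
  rw [gaussianReal_eq_withDensity_gaussianReal (a v) (b v) one_ne_zero,
    lintegral_withDensity_eq_lintegral_mul _ (by fun_prop) hsv]
  refine lintegral_congr fun y => ?_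
  by_cases hy : (y, v) ∈ s <;> simp [hy]

lemma integral_regressionLaw_logLikelihoodRatio (γ : Measure X) [IsProbabilityMeasure γ]
    {a b : X → ℝ} (ha : Measurable a) (hb : Measurable b) (hab : MemLp (a - b) 2 γ) :
    ∫ q, ((q.1 - b q.2) ^ 2 - (q.1 - a q.2) ^ 2) / 2 ∂regressionLaw γ a
      = (∫ v, (a v - b v) ^ 2 ∂γ) / 2 := by
  have hsq : Integrable (fun q : X × ℝ => (a q.1 - b q.1) ^ 2 / 2) (γ.prod (gaussianReal 0 1)) :=
    (hab.integrable_sq.div_const 2).comp_fst _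
  have hcross : Integrable (fun q : X × ℝ => (a q.1 - b q.1) * q.2)
      (γ.prod (gaussianReal 0 1)) :=
    (hab.integrable one_le_two).mul_prod IsGaussian.integrable_id
  rw [regressionLaw, integral_map (by fun_prop) (by fun_prop)]
  calc ∫ q, ((a q.1 + q.2 - b q.1) ^ 2 - (a q.1 + q.2 - a q.1) ^ 2) / 2 ∂γ.prod (gaussianReal 0 1)
      = ∫ q, ((a q.1 - b q.1) ^ 2 / 2 + (a q.1 - b q.1) * q.2) ∂γ.prod (gaussianReal 0 1) := by
        congr with q; ring
    _ = (∫ v, (a v - b v) ^ 2 ∂γ) / 2 := by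
        rw [integral_add hsq hcross, integral_fun_fst (fun v => (a v - b v) ^ 2 / 2),
          integral_prod_mul (fun v => a v - b v) (fun e => e), integral_id_gaussianReal]
        simp [integral_div]

lemma klDiv_regressionLaw (γ : Measure X) [IsProbabilityMeasure γ]
    {a b : X → ℝ} (ha : Measurable a) (hb : Measurable b) (hab : MemLp (a - b) 2 γ) :
    klDiv (regressionLaw γ a) (regressionLaw γ b) = (∫ v, (a v - b v) ^ 2 ∂γ) / 2 := by
  have : IsProbabilityMeasure (regressionLaw γ b) :=
    Measure.isProbabilityMeasure_map (by fun_prop)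
  rw [← integral_regressionLaw_logLikelihoodRatio γ ha hb hab, regressionLaw_eq_withDensity γ ha hb]
  exact klDiv_withDensity_exp _ (by fun_prop)

end RegressionLaw

theorem klDiv_single_index_le_general
    {Ω : Type*} [MeasurableSpace Ω] (μ : Measure Ω) [IsProbabilityMeasure μ]
    (p d : ℕ) (g : (Fin d → ℝ) → ℝ) (L : ℝ)
    (hg : ∀ v w : Fin d → ℝ, |g v - g w| ≤ L * Real.sqrt (∑ i, (v i - w i) ^ 2))
    (x : Ω → Fin p → ℝ) (ε : Ω → ℝ)
    (hmx : Measurable x) (hmε : Measurable ε)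
    (hx : μ.map x = Measure.pi fun _ : Fin p => gaussianReal 0 1)
    (hε : μ.map ε = gaussianReal 0 1)
    (hindep : IndepFun x ε μ)
    (B B' : Matrix (Fin p) (Fin d) ℝ) :
    klDiv (μ.map fun ω => (g (Bᵀ.mulVec (x ω)) + ε ω, x ω))
        (μ.map fun ω => (g (B'ᵀ.mulVec (x ω)) + ε ω, x ω))
      ≤ L ^ 2 * frobNorm (B - B') ^ 2 := by
  set γ := Measure.pi fun _ : Fin p => gaussianReal 0 1
  have hgc := continuous_of_abs_sub_le_mul_sqrt hg
  have hmeas (C : Matrix (Fin p) (Fin d) ℝ) : Measurable fun v => g (Cᵀ *ᵥ v) := by fun_prop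
  have hlaw (C : Matrix (Fin p) (Fin d) ℝ) :
      μ.map (fun ω => (g (Cᵀ *ᵥ x ω) + ε ω, x ω)) = regressionLaw γ fun v => g (Cᵀ *ᵥ v) := by
    rw [regressionLaw, ← hx, ← hε, ← (indepFun_iff_map_prod_eq_prod_map_map hmx.aemeasurable
      hmε.aemeasurable).1 hindep, Measure.map_map (by fun_prop) (by fun_prop)]
    rfl
  have hbound (v : Fin p → ℝ) :
      (g (Bᵀ *ᵥ v) - g (B'ᵀ *ᵥ v)) ^ 2 ≤ L ^ 2 * ∑ j, ((B - B')ᵀ *ᵥ v) j ^ 2 := by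
    simpa only [transpose_sub] using sq_sub_le_mul_sum_sq_mulVec hg Bᵀ B'ᵀ v
  have hint := (integrable_sum_sq_mulVec_pi_gaussianReal (B - B')ᵀ).const_mul (L ^ 2)
  have hmem : MemLp (fun v => g (Bᵀ *ᵥ v) - g (B'ᵀ *ᵥ v)) 2 γ := by
    refine (memLp_two_iff_integrable_sq (by fun_prop)).2 (hint.mono' (by fun_prop) ?_)
    exact Filter.Eventually.of_forall fun v => by simpa using hbound v
  rw [hlaw B, hlaw B', klDiv_regressionLaw γ (hmeas B) (hmeas B') hmem]
  calc (∫ v, (g (Bᵀ *ᵥ v) - g (B'ᵀ *ᵥ v)) ^ 2 ∂γ) / 2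
      ≤ (∫ v, L ^ 2 * ∑ j, ((B - B')ᵀ *ᵥ v) j ^ 2 ∂γ) / 2 := by
        gcongr ?_ / 2
        exact integral_mono hmem.integrable_sq hint hbound
    _ = L ^ 2 * frobNorm (B - B') ^ 2 / 2 := by
        rw [integral_const_mul, integral_sum_sq_mulVec_pi_gaussianReal, transpose_transpose,
          trace_mul_comm, frobNorm_sq_s12]
    _ ≤ L ^ 2 * frobNorm (B - B') ^ 2 := half_le_self (by positivity)

/-- Let `g : ℝ^d → ℝ` be Lipschitz with constant `L` for the Euclidean
distance. Let `x` be a standard Gaussian vector in `ℝ^p`, `ε ~ N(0,1)` independent of `x`, and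
for a `p×d` matrix `B` with orthonormal columns let `μ_{B,g}` be the joint law of
`(g(Bᵀx) + ε, x)`. Then for any two such matrices `B, B′`,
`KL(μ_{B,g}, μ_{B′,g}) ≤ L²‖B − B′‖_F²`. -/
theorem klDiv_single_index_le
    {Ω : Type*} [MeasurableSpace Ω] (μ : Measure Ω) [IsProbabilityMeasure μ]
    (p d : ℕ) (g : (Fin d → ℝ) → ℝ) (L : ℝ) (hL : 0 ≤ L)
    (hg : ∀ v w : Fin d → ℝ, |g v - g w| ≤ L * Real.sqrt (∑ i, (v i - w i) ^ 2))
    (x : Ω → Fin p → ℝ) (ε : Ω → ℝ)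
    (hmx : Measurable x) (hmε : Measurable ε)
    (hx : μ.map x = Measure.pi fun _ : Fin p => gaussianReal 0 1)
    (hε : μ.map ε = gaussianReal 0 1)
    (hindep : IndepFun x ε μ)
    (B B' : Matrix (Fin p) (Fin d) ℝ) (hB : Bᵀ * B = 1) (hB' : B'ᵀ * B' = 1) :
    klDiv (μ.map fun ω => (g (Bᵀ.mulVec (x ω)) + ε ω, x ω))
        (μ.map fun ω => (g (B'ᵀ.mulVec (x ω)) + ε ω, x ω))
      ≤ L ^ 2 * frobNorm (B - B') ^ 2 :=
  klDiv_single_index_le_general μ p d g L hg x ε hmx hmε hx hε hindep B B'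
end

section
/- Let a, b, c > 0 with cN ≥ 1, and let X₁, ..., X_N be identically distributed real random variables such that P(|X₁| ≥ at + bt²) ≤ c·exp(−t²) for all t > 0. Then E[max_{1≤i≤N} X_i²] ≤ (2a² + 8b²) log(ecN) + 2b² log²(cN). -/
/-! Write `L = log (cN)` and `h u = 2a²u + 2b²u²`. Since `(a√u + bu)² ≤ h u`, a union bound over
the identically distributed `X_i` gives `P(max X_i² ≥ h u) ≤ cN e^{-u}`. The layer-cake formula
after the substitution `t = h u` reads `E[max X_i²] = ∫₀^∞ h'(u) P(max X_i² ≥ h u) du`; bounding the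
probability by `1` on `(0, L]` and by `cN e^{-u} = e^{L-u}` on `(L, ∞)` gives
`h L + 2a² + 4b²(L + 1)`, which is at most the claimed bound. -/

open MeasureTheory ProbabilityTheory Set Filter Real
open scoped ENNReal Topology

theorem lintegral_ofReal_le_setLIntegral_deriv_mul_meas_le {Ω : Type*} [MeasurableSpace Ω]
    (μ : Measure Ω) {Y : Ω → ℝ} (hY : 0 ≤ᵐ[μ] Y) (hYm : AEMeasurable Y μ) {f f' : ℝ → ℝ}
    (hf' : ∀ x ∈ Ioi 0, HasDerivWithinAt f (f' x) (Ioi 0) x) (hf : MonotoneOn f (Ioi 0))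
    (hsurj : SurjOn f (Ioi 0) (Ioi 0)) :
    ∫⁻ ω, ENNReal.ofReal (Y ω) ∂μ ≤ ∫⁻ x in Ioi 0, ENNReal.ofReal (f' x) * μ {ω | f x ≤ Y ω} := by
  rw [lintegral_eq_lintegral_meas_le μ hY hYm,
    ← lintegral_image_eq_lintegral_deriv_mul_of_monotoneOn measurableSet_Ioi hf' hf
      fun t => μ {ω | t ≤ Y ω}]
  exact lintegral_mono_set hsurj

theorem surjOn_linear_add_sq_Ioi {α β : ℝ} (hα : 0 < α) (hβ : 0 ≤ β) :
    SurjOn (fun u => α * u + β * u ^ 2) (Ioi 0) (Ioi 0) := by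
  intro y (hy : 0 < y)
  have hy_le : y ≤ α * (y / α) + β * (y / α) ^ 2 := by
    rw [mul_div_cancel₀ y hα.ne']
    exact le_add_of_nonneg_right (by positivity)
  obtain ⟨u, hu, rfl⟩ := intermediate_value_Ioc (f := fun u => α * u + β * u ^ 2)
    (by positivity) (by fun_prop) (⟨by simpa using hy, hy_le⟩ : y ∈ Ioc _ _)
  exact ⟨u, hu.1, rfl⟩

theorem hasDerivAt_linear_add_sq (α β u : ℝ) :
    HasDerivAt (fun u => α * u + β * u ^ 2) (α + 2 * β * u) u :=
  (((hasDerivAt_id' u).const_mul α).fun_add ((hasDerivAt_pow 2 u).const_mul β)).congr_deriv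
    (by ring)

theorem monotoneOn_linear_add_sq {α β : ℝ} (hα : 0 ≤ α) (hβ : 0 ≤ β) :
    MonotoneOn (fun u => α * u + β * u ^ 2) (Ici 0) := fun x (hx : 0 ≤ x) y _ hxy => by
  dsimp only
  gcongr

theorem setLIntegral_Ioc_ofReal_linear {α β L : ℝ} (hα : 0 ≤ α) (hβ : 0 ≤ β) (hL : 0 ≤ L) :
    ∫⁻ u in Ioc 0 L, ENNReal.ofReal (α + 2 * β * u) = ENNReal.ofReal (α * L + β * L ^ 2) := by
  rw [← ofReal_integral_eq_lintegral_ofReal (Continuous.integrableOn_Ioc (by fun_prop))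
      (ae_restrict_of_forall_mem measurableSet_Ioc fun u hu => by
        have := hu.1.le; positivity),
    ← intervalIntegral.integral_of_le hL,
    intervalIntegral.integral_eq_sub_of_hasDerivAt (fun u _ => hasDerivAt_linear_add_sq α β u)
      (Continuous.intervalIntegrable (by fun_prop) _ _)]
  simp

theorem setLIntegral_Ioi_ofReal_linear_mul_exp_sub {α β L : ℝ} (hβ : 0 ≤ β)
    (hαβ : 0 ≤ α + β * L) :
    ∫⁻ u in Ioi L, ENNReal.ofReal ((α + β * u) * exp (L - u))
      = ENNReal.ofReal (α + β * (L + 1)) := by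
  set F : ℝ → ℝ := fun u => -(α + β * (u + 1)) * exp (L - u)
  have hderiv : ∀ u ∈ Ici L, HasDerivAt F ((α + β * u) * exp (L - u)) u := fun u _ =>
    ((((hasDerivAt_id' u).add_const 1).const_mul β).const_add α |>.fun_neg.fun_mul
      ((hasDerivAt_id' u).const_sub L).exp).congr_deriv (by ring)
  have hnonneg : ∀ u ∈ Ioi L, 0 ≤ (α + β * u) * exp (L - u) := fun u hu => by
    have : β * L ≤ β * u := mul_le_mul_of_nonneg_left hu.out.le hβ
    exact mul_nonneg (by linarith) (exp_pos _).le
  have hF : Tendsto F atTop (𝓝 0) := by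
    have h0 := tendsto_pow_mul_exp_neg_atTop_nhds_zero 0
    have h1 := tendsto_pow_mul_exp_neg_atTop_nhds_zero 1
    convert ((h0.const_mul (α + β)).add (h1.const_mul β)).neg.const_mul (exp L) using 1
    · ext u
      simp only [F, sub_eq_add_neg, exp_add]
      ring
    · simp
  rw [← ofReal_integral_eq_lintegral_ofReal (integrableOn_Ioi_deriv_of_nonneg' hderiv hnonneg hF)
      (ae_restrict_of_forall_mem measurableSet_Ioi hnonneg),
    integral_Ioi_of_hasDerivAt_of_nonneg' hderiv hnonneg hF]
  simp [F]

theorem setLIntegral_Ioi_ofReal_linear_mul_le_of_le_exp_neg {α β K : ℝ} (hα : 0 ≤ α)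
    (hβ : 0 ≤ β) (hK : 1 ≤ K) {P : ℝ → ℝ≥0∞} (hP_le_one : ∀ u, P u ≤ 1)
    (hP_le_exp : ∀ u > 0, P u ≤ ENNReal.ofReal (K * exp (-u))) :
    ∫⁻ u in Ioi 0, ENNReal.ofReal (α + 2 * β * u) * P u
      ≤ ENNReal.ofReal (α * log K + β * log K ^ 2 + (α + 2 * β * (log K + 1))) := by
  set L := log K
  have hL : 0 ≤ L := log_nonneg hK
  have hbulk : ∫⁻ u in Ioc 0 L, ENNReal.ofReal (α + 2 * β * u) * P u
      ≤ ENNReal.ofReal (α * L + β * L ^ 2) := by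
    rw [← setLIntegral_Ioc_ofReal_linear hα hβ hL]
    exact setLIntegral_mono' measurableSet_Ioc fun u _ => mul_le_of_le_one_right' (hP_le_one u)
  have htail : ∫⁻ u in Ioi L, ENNReal.ofReal (α + 2 * β * u) * P u
      ≤ ENNReal.ofReal (α + 2 * β * (L + 1)) := by
    rw [← setLIntegral_Ioi_ofReal_linear_mul_exp_sub (by positivity) (by positivity)]
    refine setLIntegral_mono' measurableSet_Ioi fun u (hu : L < u) => ?_
    rw [ENNReal.ofReal_mul (by nlinarith), sub_eq_add_neg, exp_add, exp_log (by linarith)]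
    exact mul_le_mul_right (hP_le_exp u (by linarith)) _
  rw [← Ioc_union_Ioi_eq_Ioi hL, lintegral_union measurableSet_Ioi (Ioc_disjoint_Ioi le_rfl),
    ENNReal.ofReal_add (by positivity) (by positivity)]
  exact add_le_add hbulk htail

theorem measure_le_iSup_le_card_mul {Ω ι : Type*} [MeasurableSpace Ω] [Fintype ι]
    {μ : Measure Ω} {X : ι → Ω → ℝ} {i₀ : ι} (hX : ∀ i, IdentDistrib (X i) (X i₀) μ μ) (r : ℝ) :
    μ {ω | r ≤ ⨆ i, X i ω} ≤ Fintype.card ι * μ {ω | r ≤ X i₀ ω} := by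
  have : Nonempty ι := ⟨i₀⟩
  have hsub : {ω | r ≤ ⨆ i, X i ω} ⊆ ⋃ i, {ω | r ≤ X i ω} := fun ω hω => by
    obtain ⟨i, hi⟩ := exists_eq_ciSup_of_finite (f := fun i => X i ω)
    exact mem_iUnion.2 ⟨i, show r ≤ X i ω by rw [hi]; exact hω⟩
  calc μ {ω | r ≤ ⨆ i, X i ω} ≤ ∑ i, μ {ω | r ≤ X i ω} :=
        (measure_mono hsub).trans (measure_iUnion_fintype_le _ _)
    _ = Fintype.card ι * μ {ω | r ≤ X i₀ ω} := by
        have h : ∀ i, μ {ω | r ≤ X i ω} = μ {ω | r ≤ X i₀ ω} := fun i =>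
          (hX i).measure_mem_eq measurableSet_Ici
        simp [h]

theorem measure_le_iSup_sq_le_of_tail {Ω ι : Type*} [MeasurableSpace Ω] [Fintype ι]
    {μ : Measure Ω} {a b c : ℝ} {X : ι → Ω → ℝ} (hmeas : ∀ i, Measurable (X i)) {i₀ : ι}
    (hident : ∀ i, μ.map (X i) = μ.map (X i₀))
    (htail : ∀ t : ℝ, 0 < t →
      μ {ω | a * t + b * t ^ 2 ≤ |X i₀ ω|} ≤ ENNReal.ofReal (c * exp (-t ^ 2)))
    {u : ℝ} (hu : 0 < u) :
    μ {ω | 2 * a ^ 2 * u + 2 * b ^ 2 * u ^ 2 ≤ ⨆ i, X i ω ^ 2}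
      ≤ ENNReal.ofReal (c * Fintype.card ι * exp (-u)) := by
  have hsq : ∀ i, IdentDistrib (X i · ^ 2) (X i₀ · ^ 2) μ μ := fun i =>
    IdentDistrib.comp ⟨(hmeas i).aemeasurable, (hmeas i₀).aemeasurable, hident i⟩
      (measurable_id.pow_const 2)
  set t := √u
  have ht : t ^ 2 = u := sq_sqrt hu.le
  have hsub : {ω | 2 * a ^ 2 * u + 2 * b ^ 2 * u ^ 2 ≤ X i₀ ω ^ 2}
      ⊆ {ω | a * t + b * t ^ 2 ≤ |X i₀ ω|} := fun ω hω => by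
    rw [mem_ofPred_eq, ← ht] at hω
    have : (a * t + b * t ^ 2) ^ 2 ≤ X i₀ ω ^ 2 := by nlinarith [sq_nonneg (a * t - b * t ^ 2)]
    exact (le_abs_self _).trans (sq_le_sq.1 this)
  calc _ ≤ Fintype.card ι * μ {ω | 2 * a ^ 2 * u + 2 * b ^ 2 * u ^ 2 ≤ X i₀ ω ^ 2} :=
        measure_le_iSup_le_card_mul hsq _
    _ ≤ Fintype.card ι * ENNReal.ofReal (c * exp (-u)) := by
        gcongr
        exact (measure_mono hsub).trans (ht ▸ htail t (sqrt_pos.2 hu))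
    _ = ENNReal.ofReal (c * Fintype.card ι * exp (-u)) := by
        rw [← ENNReal.ofReal_natCast, ← ENNReal.ofReal_mul (by positivity)]
        ring_nf

theorem expectation_max_sq_le_of_subgaussian_tail_general
    {Ω : Type*} [MeasurableSpace Ω] (μ : Measure Ω) [IsProbabilityMeasure μ]
    (N : ℕ) (a b c : ℝ) (ha : 0 < a)
    (hcN : 1 ≤ c * N)
    (X : Fin N → Ω → ℝ) (hmeas : ∀ i, Measurable (X i))
    (i₀ : Fin N)
    (hident : ∀ i, μ.map (X i) = μ.map (X i₀))
    (htail : ∀ t : ℝ, 0 < t →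
      μ {ω | a * t + b * t ^ 2 ≤ |X i₀ ω|} ≤ ENNReal.ofReal (c * Real.exp (-t ^ 2))) :
    ∫ ω, (⨆ i, (X i ω) ^ 2) ∂μ
      ≤ (2 * a ^ 2 + 8 * b ^ 2) * Real.log (Real.exp 1 * c * N)
        + 2 * b ^ 2 * Real.log (c * N) ^ 2 := by
  set Y : Ω → ℝ := fun ω => ⨆ i, X i ω ^ 2
  have hY : ∀ ω, 0 ≤ Y ω := fun ω => (sq_nonneg (X i₀ ω)).trans
    (le_ciSup (Finite.bddAbove_range (X · ω ^ 2)) i₀)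
  have hYm : Measurable Y := Measurable.iSup fun i => (hmeas i).pow_const 2
  have hlintegral := (lintegral_ofReal_le_setLIntegral_deriv_mul_meas_le μ (ae_of_all _ hY)
      hYm.aemeasurable
      (fun u _ => (hasDerivAt_linear_add_sq (2 * a ^ 2) (2 * b ^ 2) u).hasDerivWithinAt)
      ((monotoneOn_linear_add_sq (by positivity) (by positivity)).mono Ioi_subset_Ici_self)
      (surjOn_linear_add_sq_Ioi (by positivity) (by positivity))).trans
    (setLIntegral_Ioi_ofReal_linear_mul_le_of_le_exp_neg (by positivity) (by positivity) hcN
      (fun _ => prob_le_one)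
      fun u hu => by simpa using measure_le_iSup_sq_le_of_tail hmeas hident htail hu)
  have hlog : log (exp 1 * c * N) = 1 + log (c * N) := by
    rw [mul_assoc, log_mul (exp_ne_zero 1) (by positivity), log_exp]
  have hL := log_nonneg hcN
  rw [integral_eq_lintegral_of_nonneg_ae (ae_of_all _ hY) hYm.aestronglyMeasurable]
  refine ENNReal.toReal_le_of_le_ofReal (by rw [hlog]; positivity)
    (hlintegral.trans (ENNReal.ofReal_le_ofReal ?_))
  rw [hlog]
  nlinarith

/-- Let `a, b, c > 0` with `cN ≥ 1`, and let `X₁, ..., X_N` be identically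
distributed real random variables such that `P(|X₁| ≥ at + bt²) ≤ c·exp(−t²)` for all `t > 0`.
Then `E[max_{1≤i≤N} X_i²] ≤ (2a² + 8b²)log(ecN) + 2b²log²(cN)`. -/
theorem expectation_max_sq_le_of_subgaussian_tail
    {Ω : Type*} [MeasurableSpace Ω] (μ : Measure Ω) [IsProbabilityMeasure μ]
    (N : ℕ) (a b c : ℝ) (ha : 0 < a) (hb : 0 < b) (hc : 0 < c)
    (hcN : 1 ≤ c * N)
    (X : Fin N → Ω → ℝ) (hmeas : ∀ i, Measurable (X i))
    (i₀ : Fin N)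
    (hident : ∀ i, μ.map (X i) = μ.map (X i₀))
    (htail : ∀ t : ℝ, 0 < t →
      μ {ω | a * t + b * t ^ 2 ≤ |X i₀ ω|} ≤ ENNReal.ofReal (c * Real.exp (-t ^ 2))) :
    ∫ ω, (⨆ i, (X i ω) ^ 2) ∂μ
      ≤ (2 * a ^ 2 + 8 * b ^ 2) * Real.log (Real.exp 1 * c * N)
        + 2 * b ^ 2 * Real.log (c * N) ^ 2 :=
  expectation_max_sq_le_of_subgaussian_tail_general μ N a b c ha hcN X hmeas i₀ hident htail
end
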